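/- arXiv:2008.00695 — 7 statements merged into one kernel-verified Lean document; each statement's English description precedes it below -/
import Mathlib

section
/- Let q be a prime power, GF(q) the finite field with q elements, and f : GF(q) → GF(q) any function. For a, b ∈ GF(q), let c(a,b) be the vector of length q+1 over GF(q) whose coordinates are a·f(x) + b·x for each x ∈ GF(q)*, followed by the two coordinates b and a. Then every codeword c(a,b) with (a,b) ≠ (0,0) has Hamming weight exactly q if and only if both of the following hold: (1) f(x) ≠ 0 for all x ∈ GF(q)*, and (2) y·f(x) − x·f(y) ≠ 0 for all distinct x, y ∈ GF(q)*. -/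
/-- The codeword `c(a,b)` of the code `C_{(f,q)}`: coordinates `a·f(x) + b·x` for each
nonzero `x` of the finite field `F = GF(q)`, followed by the two coordinates `b` and `a`. -/
def mdsCodeword {F : Type*} [Field F] (f : F → F) (a b : F) :
    ({x : F // x ≠ 0} ⊕ Fin 2) → F :=
  Sum.elim (fun x => a * f x.1 + b * x.1) ![b, a]

/-!
A word of length `q + 1` has weight `q` exactly when it has a single zero coordinate. If (1) or
(2) fails, the codeword `c(1,0)`, resp. `c(x, -f x)`, has two zeros. Conversely, (1) and (2) make
the slope map `x ↦ f x / x` injective, hence a permutation of `GF(q)*`, so for `a, b ≠ 0` the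
equation `a·f(x) + b·x = 0`, i.e. `f x / x = -b / a`, has exactly one solution `x`, while the
last two coordinates `b, a` do not vanish; if `a = 0` or `b = 0`, the unique zero is the
coordinate carrying that value.
-/

theorem hammingNorm_add_one_eq_card_iff {ι β : Type*} [Fintype ι] [Zero β] [DecidableEq β]
    (x : ι → β) : hammingNorm x + 1 = Fintype.card ι ↔ ∃! i, x i = 0 := by
  rw [Fintype.existsUnique_iff_card_one, ← Finset.card_univ,
    ← Finset.card_filter_add_card_filter_not (fun i => x i ≠ 0)]
  simp only [hammingNorm, not_not, Nat.add_left_cancel_iff, eq_comm]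

theorem Fintype.card_subtype_ne_sum_fin_two {α : Type*} [Fintype α] [DecidableEq α] (a : α) :
    Fintype.card ({x : α // x ≠ a} ⊕ Fin 2) = Fintype.card α + 1 := by
  have : 0 < Fintype.card α := Fintype.card_pos_iff.mpr ⟨a⟩
  rw [Fintype.card_sum, Fintype.card_fin, Fintype.card_subtype_compl, Fintype.card_subtype_eq]
  omega

theorem Sum.existsUnique_of_inl {α β : Type*} {p : α ⊕ β → Prop} (hl : ∃! a, p (inl a))
    (hr : ∀ b, ¬p (inr b)) : ∃! i, p i := by
  obtain ⟨a, ha, huniq⟩ := hl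
  refine ⟨inl a, ha, ?_⟩
  rintro (a' | b) h
  · exact congrArg inl (huniq a' h)
  · exact absurd h (hr b)

theorem Sum.existsUnique_of_inr {α β : Type*} {p : α ⊕ β → Prop} (hl : ∀ a, ¬p (inl a))
    (hr : ∃! b, p (inr b)) : ∃! i, p i := by
  obtain ⟨b, hb, huniq⟩ := hr
  refine ⟨inr b, hb, ?_⟩
  rintro (a | b') h
  · exact absurd h (hl a)
  · exact congrArg inr (huniq b' h)

section mdsCodeword

variable {F : Type*} [Field F] (f : F → F) (a b : F)

@[simp]
theorem mdsCodeword_inl (x : {x : F // x ≠ 0}) : mdsCodeword f a b (.inl x) = a * f x + b * x :=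
  rfl

@[simp]
theorem mdsCodeword_inr_zero : mdsCodeword f a b (.inr 0) = b :=
  rfl

@[simp]
theorem mdsCodeword_inr_one : mdsCodeword f a b (.inr 1) = a :=
  rfl

theorem hammingNorm_mdsCodeword_eq_card_iff [Fintype F] [DecidableEq F] :
    hammingNorm (mdsCodeword f a b) = Fintype.card F ↔ ∃! i, mdsCodeword f a b i = 0 := by
  rw [← hammingNorm_add_one_eq_card_iff, Fintype.card_subtype_ne_sum_fin_two,
    Nat.add_right_cancel_iff]

variable {f}

theorem mdsCodeword_conditions_of_existsUnique
    (H : ∀ a b : F, (a, b) ≠ (0, 0) → ∃! i, mdsCodeword f a b i = 0) :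
    (∀ x : F, x ≠ 0 → f x ≠ 0) ∧ ∀ x y : F, x ≠ 0 → y ≠ 0 → x ≠ y → y * f x - x * f y ≠ 0 := by
  constructor
  · intro x hx hfx
    have := (H 1 0 (by simp)).unique (y₁ := .inl ⟨x, hx⟩) (y₂ := .inr 0)
      (by simp [hfx]) (by simp)
    exact Sum.inl_ne_inr this
  · intro x y hx hy hxy h
    have := (H x (-f x) (by simp [hx])).unique (y₁ := .inl ⟨x, hx⟩) (y₂ := .inl ⟨y, hy⟩)
      (by simp only [mdsCodeword_inl]; ring)
      (by simp only [mdsCodeword_inl]; linear_combination -h)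
    exact hxy (by simpa using this)

variable {a b}

theorem existsUnique_mul_apply_add_mul_eq_zero [Finite F] (h1 : ∀ x : F, x ≠ 0 → f x ≠ 0)
    (h2 : ∀ x y : F, x ≠ 0 → y ≠ 0 → x ≠ y → y * f x - x * f y ≠ 0) (ha : a ≠ 0) (hb : b ≠ 0) :
    ∃! x : {x : F // x ≠ 0}, a * f x + b * x = 0 := by
  let slope : {x : F // x ≠ 0} → {x : F // x ≠ 0} := fun x => ⟨f x / x, div_ne_zero (h1 x x.2) x.2⟩
  have slope_injective : Function.Injective slope := by
    intro x y hxy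
    by_contra hne
    refine h2 x y x.2 y.2 (fun h => hne (Subtype.ext h)) ?_
    have := congrArg Subtype.val hxy
    simp only [slope, div_eq_div_iff x.2 y.2] at this
    linear_combination this
  have zero_iff_slope : ∀ x : {x : F // x ≠ 0}, a * f x + b * x = 0 ↔ slope x = ⟨-b / a, by simp [ha, hb]⟩ := by
    intro x
    rw [Subtype.ext_iff, div_eq_div_iff x.2 ha]
    constructor <;> intro h <;> linear_combination h
  simpa only [zero_iff_slope] using
    (Finite.injective_iff_bijective.mp slope_injective).existsUnique _

theorem existsUnique_mdsCodeword_eq_zero [Finite F] (h1 : ∀ x : F, x ≠ 0 → f x ≠ 0)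
    (h2 : ∀ x y : F, x ≠ 0 → y ≠ 0 → x ≠ y → y * f x - x * f y ≠ 0) (hab : (a, b) ≠ (0, 0)) :
    ∃! i, mdsCodeword f a b i = 0 := by
  rcases eq_or_ne a 0 with rfl | ha
  · have hb : b ≠ 0 := by simpa using hab
    refine Sum.existsUnique_of_inr (by simp [hb]) ⟨1, by simp, fun k hk => ?_⟩
    fin_cases k
    · simp_all
    · rfl
  rcases eq_or_ne b 0 with rfl | hb
  · refine Sum.existsUnique_of_inr (by simpa [ha] using h1) ⟨0, by simp, fun k hk => ?_⟩
    fin_cases k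
    · rfl
    · simp_all
  refine Sum.existsUnique_of_inl ?_ ?_
  · simpa using existsUnique_mul_apply_add_mul_eq_zero h1 h2 ha hb
  · intro k
    fin_cases k <;> simpa

end mdsCodeword

/-- Every codeword `c(a,b)` with `(a,b) ≠ (0,0)` has Hamming weight exactly `q` if and only if
`f(x) ≠ 0` for all `x ∈ GF(q)*` and `y·f(x) − x·f(y) ≠ 0` for all distinct `x, y ∈ GF(q)*`. -/
theorem stmt0 {F : Type*} [Field F] [Fintype F] [DecidableEq F] (f : F → F) :
    (∀ a b : F, (a, b) ≠ (0, 0) →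
        hammingNorm (mdsCodeword f a b) = Fintype.card F) ↔
      ((∀ x : F, x ≠ 0 → f x ≠ 0) ∧
        ∀ x y : F, x ≠ 0 → y ≠ 0 → x ≠ y → y * f x - x * f y ≠ 0) := by
  simp only [hammingNorm_mdsCodeword_eq_card_iff]
  exact ⟨mdsCodeword_conditions_of_existsUnique,
    fun ⟨h1, h2⟩ _ _ hab => existsUnique_mdsCodeword_eq_zero h1 h2 hab⟩
end

section
/- Let q be a prime power and t a positive integer, and let f(x) = x^t on GF(q). Then every codeword c(a,b) = ((a·x^t + b·x)_{x ∈ GF(q)*}, b, a) with (a,b) ≠ (0,0) has Hamming weight exactly q (equivalently, y·x^t ≠ x·y^t for all distinct x, y ∈ GF(q)*) if and only if gcd(q−1, t−1) = 1. -/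
/-- The codeword `c(a,b)` of the code `C_{(f,q)}` with `f(x) = x^t`: coordinates
`a·x^t + b·x` for each nonzero `x` of `F = GF(q)`, followed by `b` and `a`. -/
def monomialCodeword {F : Type*} [Field F] (t : ℕ) (a b : F) :
    ({x : F // x ≠ 0} ⊕ Fin 2) → F :=
  Sum.elim (fun x => a * x.1 ^ t + b * x.1) ![b, a]

/-!
Write `t = k + 1`. At `x ≠ 0` the coordinate `a x^t + b x = (a x^k + b) x` vanishes iff
`a x^k = -b`. Hence `c(a,b)` has weight `q` whenever `a = 0` or `b = 0`, while for `a, b ≠ 0`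
its weight is `q + 1` minus the number of `k`-th roots of `-b/a` in `GF(q)*`. So all nonzero
codewords have weight `q` iff `x ↦ x^k` is a bijection, equivalently an injection, of `GF(q)*`;
and `y x^t = x y^t` iff `x^k = y^k`, so the second condition is the same injectivity. By Cauchy's
theorem the `k`-th power map of a finite group `G` is injective iff `gcd(|G|, k) = 1`.
-/

open Finset

theorem pow_left_injective_iff_coprime_card {G : Type*} [Group G] [Finite G] (k : ℕ) :
    Function.Injective (· ^ k : G → G) ↔ (Nat.card G).Coprime k := by
  refine ⟨fun hinj => ?_, fun h => h.pow_left_bijective.injective⟩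
  by_contra hk
  obtain ⟨p, hp, hpG, hpk⟩ := Nat.Prime.not_coprime_iff_dvd.mp hk
  have := Fact.mk hp
  obtain ⟨g, hg⟩ := exists_prime_orderOf_dvd_card' p hpG
  have hg_one : g = 1 := hinj <| by
    simpa using orderOf_dvd_iff_pow_eq_one.mp (hg ▸ hpk)
  rw [hg_one, orderOf_one] at hg
  exact hp.one_lt.ne hg

section GroupWithZero

variable {G₀ : Type*} [GroupWithZero G₀]

theorem injOn_pow_ne_zero_iff_units_pow_injective (k : ℕ) :
    Set.InjOn (· ^ k : G₀ → G₀) {x | x ≠ 0} ↔ Function.Injective (· ^ k : G₀ˣ → G₀ˣ) := by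
  refine ⟨fun hinj u v huv => Units.ext (hinj u.ne_zero v.ne_zero ?_),
    fun hinj x hx y hy hxy => ?_⟩
  · simpa using congrArg Units.val huv
  · have := hinj (a₁ := Units.mk0 x hx) (a₂ := Units.mk0 y hy) (Units.ext (by simpa))
    simpa using congrArg Units.val this

theorem injOn_pow_ne_zero_iff_gcd [Fintype G₀] (k : ℕ) :
    Set.InjOn (· ^ k : G₀ → G₀) {x | x ≠ 0} ↔ Nat.gcd (Fintype.card G₀ - 1) k = 1 := by
  classical
  rw [injOn_pow_ne_zero_iff_units_pow_injective, pow_left_injective_iff_coprime_card,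
    Nat.card_eq_fintype_card, Fintype.card_units, Nat.Coprime]

theorem exists_ne_zero_pow_eq_of_injOn [Finite G₀] {k : ℕ}
    (hinj : Set.InjOn (· ^ k : G₀ → G₀) {x | x ≠ 0}) {c : G₀} (hc : c ≠ 0) :
    ∃ x, x ≠ 0 ∧ x ^ k = c := by
  have hbij := (Set.toFinite {x : G₀ | x ≠ 0}).injOn_iff_bijOn_of_mapsTo
    (fun _ hx => pow_ne_zero k hx) |>.mp hinj
  obtain ⟨x, hx, rfl⟩ := hbij.surjOn hc
  exact ⟨x, hx, rfl⟩

end GroupWithZero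

theorem mul_pow_succ_eq_iff {G₀ : Type*} [CommGroupWithZero G₀] {x y : G₀} (hx : x ≠ 0)
    (hy : y ≠ 0) (k : ℕ) : y * x ^ (k + 1) = x * y ^ (k + 1) ↔ x ^ k = y ^ k := by
  rw [show y * x ^ (k + 1) = x * y * x ^ k by rw [pow_succ']; ac_rfl,
    show x * y ^ (k + 1) = x * y * y ^ k by rw [pow_succ', mul_assoc],
    mul_right_inj' (mul_ne_zero hx hy)]

theorem injOn_pow_ne_zero_iff_forall_mul_pow_succ_ne {G₀ : Type*} [CommGroupWithZero G₀]
    (k : ℕ) : Set.InjOn (· ^ k : G₀ → G₀) {x | x ≠ 0} ↔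
      ∀ x y : G₀, x ≠ 0 → y ≠ 0 → x ≠ y → y * x ^ (k + 1) ≠ x * y ^ (k + 1) := by
  refine ⟨fun hinj x y hx hy hne h => hne (hinj hx hy ((mul_pow_succ_eq_iff hx hy k).mp h)),
    fun h x hx y hy hxy => ?_⟩
  by_contra hne
  exact h x y hx hy hne ((mul_pow_succ_eq_iff hx hy k).mpr hxy)

theorem hammingNorm_sumElim {α γ β : Type*} [Fintype α] [Fintype γ] [Zero β] [DecidableEq β]
    (f : α → β) (g : γ → β) : hammingNorm (Sum.elim f g) = hammingNorm f + hammingNorm g := by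
  simp only [hammingNorm, card_filter, Fintype.sum_sum_type, Sum.elim_inl, Sum.elim_inr]
  rfl

theorem monomial_eval_eq_zero_iff {R : Type*} [CommRing R] [NoZeroDivisors R] {x : R}
    (hx : x ≠ 0) (k : ℕ) (a b : R) : a * x ^ (k + 1) + b * x = 0 ↔ a * x ^ k + b = 0 := by
  rw [show a * x ^ (k + 1) + b * x = (a * x ^ k + b) * x by ring, mul_eq_zero, or_iff_left hx]

section Codeword

variable {F : Type*} [Field F] [Fintype F] [DecidableEq F]

theorem hammingNorm_monomialCodeword_add_card (k : ℕ) (a b : F) :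
    hammingNorm (monomialCodeword (k + 1) a b) + #{x : {x : F // x ≠ 0} | a * x.1 ^ k + b = 0} =
      Fintype.card F - 1 + hammingNorm ![b, a] := by
  have hcard : Fintype.card {x : F // x ≠ 0} = Fintype.card F - 1 := by
    simp [Fintype.card_subtype_compl]
  have hnorm : hammingNorm (fun x : {x : F // x ≠ 0} => a * x.1 ^ (k + 1) + b * x.1) =
      #{x : {x : F // x ≠ 0} | ¬a * x.1 ^ k + b = 0} := by
    simp only [hammingNorm, ne_eq, fun x : {x : F // x ≠ 0} => monomial_eval_eq_zero_iff x.2 k a b]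
  rw [monomialCodeword, hammingNorm_sumElim, hnorm, ← hcard, ← card_univ,
    ← card_filter_add_card_filter_not (s := univ) (fun x : {x : F // x ≠ 0} => a * x.1 ^ k + b = 0)]
  omega

theorem injOn_pow_of_hammingNorm_monomialCodeword_eq_card {k : ℕ}
    (h : ∀ a b : F, (a, b) ≠ (0, 0) →
      hammingNorm (monomialCodeword (k + 1) a b) = Fintype.card F) :
    Set.InjOn (· ^ k : F → F) {x | x ≠ 0} := by
  intro x hx y hy hxy
  by_contra hne
  -- `c(1, -x^k)` vanishes at both `x` and `y`, so its weight is at most `q - 1`.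
  have hzeros : 2 ≤ #{z : {z : F // z ≠ 0} | 1 * z.1 ^ k + -x ^ k = 0} := by
    calc 2 = #{(⟨x, hx⟩ : {z : F // z ≠ 0}), ⟨y, hy⟩} :=
          (card_pair (by simpa [Subtype.ext_iff] using hne)).symm
      _ ≤ _ := card_le_card <| by
          intro z hz
          rcases mem_insert.mp hz with rfl | hz
          · simp
          · rw [mem_singleton.mp hz]
            simp [hxy]
  have hsum := hammingNorm_monomialCodeword_add_card k 1 (-x ^ k)
  have htail : hammingNorm ![-x ^ k, (1 : F)] ≤ 2 :=
    hammingNorm_le_card_fintype.trans_eq (Fintype.card_fin 2)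
  have hpos : 0 < Fintype.card F := Fintype.card_pos
  have := h 1 (-x ^ k) (by simp)
  omega

theorem hammingNorm_monomialCodeword_eq_card_of_injOn {k : ℕ}
    (hinj : Set.InjOn (· ^ k : F → F) {x | x ≠ 0}) {a b : F} (hab : (a, b) ≠ (0, 0)) :
    hammingNorm (monomialCodeword (k + 1) a b) = Fintype.card F := by
  have hsum := hammingNorm_monomialCodeword_add_card k a b
  have hpos : 0 < Fintype.card F := Fintype.card_pos
  rcases eq_or_ne a 0 with rfl | ha
  · have hb : b ≠ 0 := by rintro rfl; exact hab rfl
    have htail : hammingNorm ![b, (0 : F)] = 1 := by simp [hammingNorm, card_filter, hb]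
    have hzeros : #{z : {z : F // z ≠ 0} | 0 * z.1 ^ k + b = 0} = 0 := by simp [hb]
    omega
  rcases eq_or_ne b 0 with rfl | hb
  · have htail : hammingNorm ![(0 : F), a] = 1 := by simp [hammingNorm, card_filter, ha]
    have hzeros : #{z : {z : F // z ≠ 0} | a * z.1 ^ k + 0 = 0} = 0 :=
      card_eq_zero.mpr <| filter_eq_empty_iff.mpr fun z _ => by simp [ha, z.2]
    omega
  have hzeros : #{z : {z : F // z ≠ 0} | a * z.1 ^ k + b = 0} = 1 := by
    obtain ⟨x₀, hx₀, hx₀k⟩ := exists_ne_zero_pow_eq_of_injOn hinj (c := -b / a) (by simp [ha, hb])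
    have hroot (z : F) : a * z ^ k + b = 0 ↔ z ^ k = x₀ ^ k := by
      rw [hx₀k, eq_div_iff ha, eq_neg_iff_add_eq_zero, mul_comm]
    refine card_eq_one.mpr ⟨⟨x₀, hx₀⟩, eq_singleton_iff_unique_mem.mpr ⟨by simp [hroot], ?_⟩⟩
    intro z hz
    exact Subtype.ext (hinj z.2 hx₀ ((hroot z).mp (mem_filter.mp hz).2))
  have htail : hammingNorm ![b, a] = 2 := by simp [hammingNorm, card_filter, ha, hb]
  omega

end Codeword

/-- For `f(x) = x^t` with `t` a positive integer, every codeword `c(a,b)` with `(a,b) ≠ (0,0)`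
has Hamming weight exactly `q` (equivalently, `y·x^t ≠ x·y^t` for all distinct
`x, y ∈ GF(q)*`) if and only if `gcd(q−1, t−1) = 1`. -/
theorem stmt1 {F : Type*} [Field F] [Fintype F] [DecidableEq F] (t : ℕ) (ht : 0 < t) :
    ((∀ a b : F, (a, b) ≠ (0, 0) →
        hammingNorm (monomialCodeword t a b) = Fintype.card F) ↔
      Nat.gcd (Fintype.card F - 1) (t - 1) = 1) ∧
    ((∀ x y : F, x ≠ 0 → y ≠ 0 → x ≠ y → y * x ^ t ≠ x * y ^ t) ↔
      Nat.gcd (Fintype.card F - 1) (t - 1) = 1) := by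
  obtain ⟨k, rfl⟩ : ∃ k, t = k + 1 := ⟨t - 1, by omega⟩
  rw [Nat.add_sub_cancel, ← injOn_pow_ne_zero_iff_gcd]
  exact ⟨⟨injOn_pow_of_hammingNorm_monomialCodeword_eq_card,
    fun hinj _ _ => hammingNorm_monomialCodeword_eq_card_of_injOn hinj⟩,
    (injOn_pow_ne_zero_iff_forall_mul_pow_succ_ne k).symm⟩
end

section
/- Let p be a prime, m ≥ 2, and q = p^m. For a ∈ GF(p) and b ∈ GF(q), let c(a,b) be the vector of length p^m + 1 over GF(p) with coordinates a + Tr_{q/p}(b·x) for each x ∈ GF(q)*, followed by a and Tr_{q/p}(b). Then: (i) c(a,b) = 0 if and only if (a,b) = (0,0), so the code {c(a,b) : a ∈ GF(p), b ∈ GF(q)} has exactly p^{m+1} codewords; (ii) the number of pairs (a,b) ∈ GF(p) × GF(q) for which c(a,b) has Hamming weight (p−1)p^{m−1} is p(p^{m−1}−1); (iii) the number of pairs for which c(a,b) has weight (p−1)p^{m−1}+1 is p^m(p−1); (iv) the number of pairs for which c(a,b) has weight p^m is p−1; and no other nonzero weights occur. In particular, the minimum distance of the code is (p−1)p^{m−1}.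 -/
open Finset


/-- The codeword of the subfield code `C_{(1,q)}^{(p)}`: coordinates `a + Tr_{q/p}(b·x)`
for each nonzero `x` of `F = GF(q)`, followed by `a` and `Tr_{q/p}(b)`. -/
noncomputable def subfieldCodewordOne (p : ℕ) (F : Type*) [Field F] [Algebra (ZMod p) F]
    (a : ZMod p) (b : F) : ({x : F // x ≠ 0} ⊕ Fin 2) → ZMod p :=
  Sum.elim (fun x => a + Algebra.trace (ZMod p) F (b * x.1))
    ![a, Algebra.trace (ZMod p) F b]

lemma fiber_card {p m : ℕ} (hp : p.Prime) {F : Type*} [Field F] [Fintype F] [DecidableEq F]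
    [Algebra (ZMod p) F] (hcard : Fintype.card F = p ^ m) (hm : 1 ≤ m)
    (φ : F →ₗ[ZMod p] ZMod p) (hφ : ∃ y, φ y ≠ 0) (c : ZMod p) :
    (univ.filter fun x : F => φ x = c).card = p ^ (m - 1) := by
  haveI : Fact p.Prime := ⟨hp⟩
  obtain ⟨y, hy⟩ := hφ
  have surj : ∀ d : ZMod p, ∃ x : F, φ x = d := by
    intro d
    refine ⟨(d * (φ y)⁻¹) • y, ?_⟩
    rw [map_smul, smul_eq_mul, mul_assoc, inv_mul_cancel₀ hy, mul_one]
  have key : ∀ d : ZMod p, (univ.filter fun x : F => φ x = d).card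
      = (univ.filter fun x : F => φ x = 0).card := by
    intro d
    obtain ⟨x₀, hx₀⟩ := surj d
    apply Finset.card_bij' (fun x _ => x - x₀) (fun x _ => x + x₀)
    · intro a ha
      simp only [mem_filter, mem_univ, true_and] at ha ⊢
      rw [map_sub, ha, hx₀, sub_self]
    · intro a ha
      simp only [mem_filter, mem_univ, true_and] at ha ⊢
      rw [map_add, ha, hx₀, zero_add]
    · intro a _; ring
    · intro a _; ring
  have hsum : Fintype.card F
      = ∑ d : ZMod p, (univ.filter fun x : F => φ x = d).card := by
    rw [← card_univ]
    exact Finset.card_eq_sum_card_fiberwise (fun x _ => mem_univ (φ x))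
  simp_rw [key] at hsum
  rw [Finset.sum_const, card_univ, ZMod.card, smul_eq_mul, hcard] at hsum
  have hpow : p ^ m = p * p ^ (m - 1) := by
    rw [← pow_succ']
    congr 1
    omega
  rw [key c]
  have := hp.pos
  exact Nat.eq_of_mul_eq_mul_left this (by omega : p * (univ.filter fun x : F => φ x = 0).card = p * p ^ (m-1))

lemma exists_trace_ne {p : ℕ} (hp : p.Prime) {F : Type*} [Field F] [Fintype F]
    [Algebra (ZMod p) F] {b : F} (hb : b ≠ 0) :
    ∃ x : F, x ≠ 0 ∧ Algebra.trace (ZMod p) F (b * x) ≠ 0 := by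
  haveI : Fact p.Prime := ⟨hp⟩
  obtain ⟨y, hy⟩ := Algebra.trace_surjective (ZMod p) F 1
  have hy0 : y ≠ 0 := by
    rintro rfl
    rw [map_zero] at hy
    exact one_ne_zero hy.symm
  refine ⟨b⁻¹ * y, by simp [hb, hy0], ?_⟩
  rw [← mul_assoc, mul_inv_cancel₀ hb, one_mul, hy]
  exact one_ne_zero

lemma weight_eq {p m : ℕ} (hp : p.Prime) {F : Type*} [Field F] [Fintype F] [DecidableEq F]
    [Algebra (ZMod p) F] (hcard : Fintype.card F = p ^ m) (hm : 1 ≤ m)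
    (a : ZMod p) (b : F) :
    hammingNorm (subfieldCodewordOne p F a b) =
      if b = 0 then (if a = 0 then 0 else p ^ m)
      else (p - 1) * p ^ (m - 1) +
        (if Algebra.trace (ZMod p) F b = 0 then 0 else 1) := by
  classical
  haveI : Fact p.Prime := ⟨hp⟩
  have hq1 : 1 ≤ p ^ m := Nat.one_le_pow _ _ hp.pos
  have hN : hammingNorm (subfieldCodewordOne p F a b) =
      (∑ x : {x : F // x ≠ 0},
        if a + Algebra.trace (ZMod p) F (b * x.1) ≠ 0 then 1 else 0) +
      ((if a ≠ 0 then 1 else 0) +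
       (if Algebra.trace (ZMod p) F b ≠ 0 then 1 else 0)) := by
    rw [hammingNorm, Finset.card_filter, Fintype.sum_sum_type, Fin.sum_univ_two]
    simp [subfieldCodewordOne]
    refine congrArg₂ _ (Finset.sum_congr rfl fun x _ => ?_) (congrArg₂ _ ?_ rfl) <;>
      split_ifs <;> simp_all
  have hsub : (∑ x : {x : F // x ≠ 0},
        if a + Algebra.trace (ZMod p) F (b * x.1) ≠ 0 then 1 else 0) =
      ∑ x ∈ univ.filter (fun x : F => x ≠ 0),
        (if a + Algebra.trace (ZMod p) F (b * x) ≠ 0 then 1 else 0) :=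
    (Finset.sum_subtype (p := fun x : F => x ≠ 0)
      (univ.filter fun x : F => x ≠ 0) (by simp)
      (fun x => if a + Algebra.trace (ZMod p) F (b * x) ≠ 0 then (1:ℕ) else 0)).symm
  have hsplit : (∑ x : F, if a + Algebra.trace (ZMod p) F (b * x) ≠ 0 then (1:ℕ) else 0) =
      (∑ x ∈ univ.filter (fun x : F => x ≠ 0),
        (if a + Algebra.trace (ZMod p) F (b * x) ≠ 0 then 1 else 0)) +
      (if a ≠ 0 then 1 else 0) := by
    rw [← Finset.sum_filter_add_sum_filter_not univ (fun x : F => x ≠ 0)]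
    congr 1
    have h0 : univ.filter (fun x : F => ¬x ≠ 0) = {0} := by ext x; simp
    rw [h0, Finset.sum_singleton, mul_zero, map_zero, add_zero]
  have htot : (∑ x : F, if a + Algebra.trace (ZMod p) F (b * x) ≠ 0 then (1:ℕ) else 0) =
      (univ.filter fun x : F => a + Algebra.trace (ZMod p) F (b * x) ≠ 0).card :=
    (Finset.card_filter _ _).symm
  by_cases hb : b = 0
  · subst hb
    have htotval : (univ.filter fun x : F =>
        a + Algebra.trace (ZMod p) F ((0:F) * x) ≠ 0).card
        = if a = 0 then 0 else p ^ m := by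
      by_cases ha : a = 0
      · simp [ha]
      · simp only [zero_mul, map_zero, add_zero]
        rw [Finset.filter_true_of_mem (fun _ _ => ha), card_univ, hcard, if_neg ha]
    rw [hN, hsub]
    rw [htot] at hsplit
    rw [htotval] at hsplit
    simp only [zero_mul, map_zero, add_zero, if_true, ite_true] at hsplit ⊢
    by_cases ha : a = 0 <;> simp only [ha, if_pos, if_neg, ne_eq, not_true_eq_false,
      not_false_eq_true, ite_true, ite_false] at hsplit ⊢ <;> omega
  · -- b ≠ 0
    set φ : F →ₗ[ZMod p] ZMod p :=
      (Algebra.trace (ZMod p) F).comp (LinearMap.mulLeft (ZMod p) b) with hφdef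
    have hφx : ∀ x : F, φ x = Algebra.trace (ZMod p) F (b * x) := fun x => rfl
    obtain ⟨x₁, hx₁0, hx₁⟩ := exists_trace_ne hp hb
    have hfib := fiber_card hp hcard hm φ ⟨x₁, by rw [hφx]; exact hx₁⟩ (-a)
    have hcompl : (univ.filter fun x : F =>
        a + Algebra.trace (ZMod p) F (b * x) ≠ 0).card = p ^ m - p ^ (m - 1) := by
      have hEq : (univ.filter fun x : F => a + Algebra.trace (ZMod p) F (b * x) ≠ 0)
          = univ.filter (fun x : F => ¬ (φ x = -a)) := by
        ext x
        simp only [mem_filter, mem_univ, true_and, hφx]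
        constructor
        · intro h h'; exact h (by rw [h']; ring)
        · intro h h'; exact h (by linear_combination h')
      have hsum2 := Finset.card_filter_add_card_filter_not
        (s := (univ : Finset F)) (p := fun x : F => φ x = -a)
      rw [card_univ, hcard, hfib] at hsum2
      rw [hEq]
      omega
    rw [hN, hsub, if_neg hb]
    rw [htot, hcompl] at hsplit
    have hple : p ^ (m - 1) ≤ p ^ m := Nat.pow_le_pow_right hp.pos (by omega)
    have hw : (p - 1) * p ^ (m - 1) = p ^ m - p ^ (m - 1) := by
      rw [Nat.sub_one_mul]
      congr 1
      rw [← pow_succ']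
      congr 1
      omega
    have ht1 : 1 ≤ p ^ (m-1) := Nat.one_le_pow _ _ hp.pos
    rw [hw]
    by_cases ha : a = 0 <;> by_cases htr : Algebra.trace (ZMod p) F b = 0 <;>
      simp only [ha, htr, ne_eq, not_true_eq_false, not_false_eq_true, ite_true,
        ite_false, if_pos, if_neg] at hsplit ⊢ <;> omega

/-- For `p` prime, `m ≥ 2`, `q = p^m`: (i) `c(a,b) = 0` iff `(a,b) = (0,0)`, so the code
has exactly `p^{m+1}` codewords; (ii) exactly `p(p^{m−1}−1)` pairs give weight
`(p−1)p^{m−1}`; (iii) exactly `p^m(p−1)` pairs give weight `(p−1)p^{m−1}+1`;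
(iv) exactly `p−1` pairs give weight `p^m`; and no other nonzero weights occur.
In particular the minimum distance is `(p−1)p^{m−1}`. -/
theorem stmt3 (p m : ℕ) (hp : p.Prime) (hm : 2 ≤ m) (F : Type*) [Field F] [Fintype F]
    [DecidableEq F] [Algebra (ZMod p) F] (hcard : Fintype.card F = p ^ m) :
    (∀ (a : ZMod p) (b : F), subfieldCodewordOne p F a b = 0 ↔ a = 0 ∧ b = 0) ∧
    Set.ncard {c | ∃ (a : ZMod p) (b : F), c = subfieldCodewordOne p F a b} = p ^ (m + 1) ∧
    Set.ncard {ab : ZMod p × F |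
        hammingNorm (subfieldCodewordOne p F ab.1 ab.2) = (p - 1) * p ^ (m - 1)} =
      p * (p ^ (m - 1) - 1) ∧
    Set.ncard {ab : ZMod p × F |
        hammingNorm (subfieldCodewordOne p F ab.1 ab.2) = (p - 1) * p ^ (m - 1) + 1} =
      p ^ m * (p - 1) ∧
    Set.ncard {ab : ZMod p × F |
        hammingNorm (subfieldCodewordOne p F ab.1 ab.2) = p ^ m} = p - 1 ∧
    (∀ (a : ZMod p) (b : F),
      hammingNorm (subfieldCodewordOne p F a b) = 0 ∨
      hammingNorm (subfieldCodewordOne p F a b) = (p - 1) * p ^ (m - 1) ∨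
      hammingNorm (subfieldCodewordOne p F a b) = (p - 1) * p ^ (m - 1) + 1 ∨
      hammingNorm (subfieldCodewordOne p F a b) = p ^ m) ∧
    (∀ (a : ZMod p) (b : F), ¬(a = 0 ∧ b = 0) →
      (p - 1) * p ^ (m - 1) ≤ hammingNorm (subfieldCodewordOne p F a b)) := by
  classical
  haveI : Fact p.Prime := ⟨hp⟩
  have hm1 : 1 ≤ m := by omega
  have hq1 : 1 ≤ p ^ m := Nat.one_le_pow _ _ hp.pos
  have ht1 : 1 ≤ p ^ (m - 1) := Nat.one_le_pow _ _ hp.pos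
  have hpm : p * p ^ (m - 1) = p ^ m := by
    rw [← pow_succ']; congr 1; omega
  have ht2 : 2 ≤ p ^ (m - 1) := by
    calc 2 ≤ p := hp.two_le
    _ = p ^ 1 := (pow_one p).symm
    _ ≤ p ^ (m - 1) := Nat.pow_le_pow_right hp.pos (by omega)
  have h2t : 2 * p ^ (m - 1) ≤ p ^ m := by
    calc 2 * p ^ (m - 1) ≤ p * p ^ (m - 1) := Nat.mul_le_mul_right _ hp.two_le
    _ = p ^ m := hpm
  have hple : p ^ (m - 1) ≤ p ^ m := by omega
  have hw : (p - 1) * p ^ (m - 1) = p ^ m - p ^ (m - 1) := by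
    rw [Nat.sub_one_mul, hpm]
  -- trace fiber counts
  obtain ⟨y, hy⟩ := Algebra.trace_surjective (ZMod p) F 1
  have htrne : ∃ y, Algebra.trace (ZMod p) F y ≠ 0 :=
    ⟨y, by rw [hy]; exact one_ne_zero⟩
  have hfib0 := fiber_card hp hcard hm1 (Algebra.trace (ZMod p) F) htrne 0
  have hcA : (univ.filter fun b : F => b ≠ 0 ∧ Algebra.trace (ZMod p) F b = 0).card
      = p ^ (m - 1) - 1 := by
    have heq : (univ.filter fun b : F => b ≠ 0 ∧ Algebra.trace (ZMod p) F b = 0)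
        = (univ.filter fun b : F => Algebra.trace (ZMod p) F b = 0).erase 0 := by
      ext b; simp [Finset.mem_erase]
    have h0mem : (0:F) ∈ univ.filter fun b : F => Algebra.trace (ZMod p) F b = 0 :=
      Finset.mem_filter.mpr ⟨mem_univ (0:F), map_zero (Algebra.trace (ZMod p) F)⟩
    rw [heq, Finset.card_erase_of_mem h0mem, hfib0]
  have hcB : (univ.filter fun b : F => b ≠ 0 ∧ Algebra.trace (ZMod p) F b ≠ 0).card
      = p ^ m - p ^ (m - 1) := by
    have heq : (univ.filter fun b : F => b ≠ 0 ∧ Algebra.trace (ZMod p) F b ≠ 0)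
        = univ.filter fun b : F => ¬(Algebra.trace (ZMod p) F b = 0) := by
      ext b
      simp only [mem_filter, mem_univ, true_and]
      constructor
      · exact fun h => h.2
      · intro h
        refine ⟨?_, h⟩
        rintro rfl
        exact h (map_zero _)
    have hsum2 := Finset.card_filter_add_card_filter_not
      (s := (univ : Finset F)) (p := fun b : F => Algebra.trace (ZMod p) F b = 0)
    rw [card_univ, hcard, hfib0] at hsum2
    rw [heq]
    omega
  -- (i) zero iff
  have part1 : ∀ (a : ZMod p) (b : F),
      subfieldCodewordOne p F a b = 0 ↔ a = 0 ∧ b = 0 := by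
    intro a b
    constructor
    · intro h
      have h0 : hammingNorm (subfieldCodewordOne p F a b) = 0 := by
        rw [h]; exact hammingNorm_zero
      rw [weight_eq hp hcard hm1, hw] at h0
      by_cases hb : b = 0
      · rw [if_pos hb] at h0
        by_cases ha : a = 0
        · exact ⟨ha, hb⟩
        · rw [if_neg ha] at h0; omega
      · rw [if_neg hb] at h0
        by_cases htr : Algebra.trace (ZMod p) F b = 0
        · rw [if_pos htr] at h0; omega
        · rw [if_neg htr] at h0; omega
    · rintro ⟨rfl, rfl⟩
      have h0 : hammingNorm (subfieldCodewordOne p F (0 : ZMod p) (0 : F)) = 0 := by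
        rw [weight_eq hp hcard hm1]; simp
      exact hammingNorm_eq_zero.mp h0
  -- (i) code size
  have hinj : Function.Injective
      (fun ab : ZMod p × F => subfieldCodewordOne p F ab.1 ab.2) := by
    rintro ⟨a, b⟩ ⟨a', b'⟩ h
    simp only at h
    have ha : a = a' := by
      have h2 := congrFun h (Sum.inr 0)
      simpa [subfieldCodewordOne] using h2
    have hb : b = b' := by
      by_contra hne
      obtain ⟨x, hx0, hx⟩ := exists_trace_ne hp (sub_ne_zero_of_ne hne)
      apply hx
      have h2 := congrFun h (Sum.inl ⟨x, hx0⟩)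
      simp only [subfieldCodewordOne, Sum.elim_inl, ha] at h2
      have h3 : Algebra.trace (ZMod p) F (b * x) = Algebra.trace (ZMod p) F (b' * x) :=
        add_left_cancel h2
      rw [sub_mul, map_sub, h3, sub_self]
    simp [ha, hb]
  have part2 : Set.ncard {c | ∃ (a : ZMod p) (b : F),
      c = subfieldCodewordOne p F a b} = p ^ (m + 1) := by
    have hrange : {c | ∃ (a : ZMod p) (b : F), c = subfieldCodewordOne p F a b}
        = Set.range (fun ab : ZMod p × F => subfieldCodewordOne p F ab.1 ab.2) := by
      ext c
      constructor
      · rintro ⟨a, b, rfl⟩; exact ⟨(a, b), rfl⟩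
      · rintro ⟨⟨a, b⟩, rfl⟩; exact ⟨a, b, rfl⟩
    rw [hrange, ← Set.image_univ, Set.ncard_image_of_injective _ hinj, Set.ncard_univ,
      Nat.card_eq_fintype_card, Fintype.card_prod, ZMod.card, hcard]
    exact (pow_succ' p m).symm
  -- weight-(p-1)p^{m-1} count
  have part3 : Set.ncard {ab : ZMod p × F |
      hammingNorm (subfieldCodewordOne p F ab.1 ab.2) = (p - 1) * p ^ (m - 1)}
      = p * (p ^ (m - 1) - 1) := by
    have hEq : {ab : ZMod p × F |
        hammingNorm (subfieldCodewordOne p F ab.1 ab.2) = (p - 1) * p ^ (m - 1)}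
        = ↑((univ : Finset (ZMod p)) ×ˢ
          (univ.filter fun b : F => b ≠ 0 ∧ Algebra.trace (ZMod p) F b = 0)) := by
      ext ⟨a, b⟩
      simp only [Set.mem_setOf_eq, Finset.coe_product, Set.mem_prod, Finset.mem_coe,
        Finset.mem_filter, Finset.mem_univ, true_and]
      rw [weight_eq hp hcard hm1, hw]
      constructor
      · intro h
        by_cases hb : b = 0
        · rw [if_pos hb] at h
          by_cases ha : a = 0
          · rw [if_pos ha] at h; omega
          · rw [if_neg ha] at h; omega
        · rw [if_neg hb] at h
          by_cases htr : Algebra.trace (ZMod p) F b = 0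
          · exact ⟨hb, htr⟩
          · rw [if_neg htr] at h; omega
      · rintro ⟨hb, htr⟩
        rw [if_neg hb, if_pos htr]
        omega
    rw [hEq, Set.ncard_coe_finset, card_product, card_univ, ZMod.card, hcA]
  -- weight-(p-1)p^{m-1}+1 count
  have part4 : Set.ncard {ab : ZMod p × F |
      hammingNorm (subfieldCodewordOne p F ab.1 ab.2) = (p - 1) * p ^ (m - 1) + 1}
      = p ^ m * (p - 1) := by
    have hEq : {ab : ZMod p × F |
        hammingNorm (subfieldCodewordOne p F ab.1 ab.2) = (p - 1) * p ^ (m - 1) + 1}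
        = ↑((univ : Finset (ZMod p)) ×ˢ
          (univ.filter fun b : F => b ≠ 0 ∧ Algebra.trace (ZMod p) F b ≠ 0)) := by
      ext ⟨a, b⟩
      simp only [Set.mem_setOf_eq, Finset.coe_product, Set.mem_prod, Finset.mem_coe,
        Finset.mem_filter, Finset.mem_univ, true_and]
      rw [weight_eq hp hcard hm1, hw]
      constructor
      · intro h
        by_cases hb : b = 0
        · rw [if_pos hb] at h
          by_cases ha : a = 0
          · rw [if_pos ha] at h; omega
          · rw [if_neg ha] at h; omega
        · rw [if_neg hb] at h
          by_cases htr : Algebra.trace (ZMod p) F b = 0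
          · rw [if_pos htr] at h; omega
          · exact ⟨hb, htr⟩
      · rintro ⟨hb, htr⟩
        rw [if_neg hb, if_neg htr]
    rw [hEq, Set.ncard_coe_finset, card_product, card_univ, ZMod.card, hcB]
    have hz : (p : ℤ) * p ^ (m - 1) = p ^ m := by exact_mod_cast hpm
    have h1p : 1 ≤ p := hp.one_le
    zify [hple, h1p]
    linear_combination -hz
  -- weight-p^m count
  have part5 : Set.ncard {ab : ZMod p × F |
      hammingNorm (subfieldCodewordOne p F ab.1 ab.2) = p ^ m} = p - 1 := by
    have hEq : {ab : ZMod p × F |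
        hammingNorm (subfieldCodewordOne p F ab.1 ab.2) = p ^ m}
        = ↑((univ.filter fun a : ZMod p => a ≠ 0) ×ˢ
          (univ.filter fun b : F => b = 0)) := by
      ext ⟨a, b⟩
      simp only [Set.mem_setOf_eq, Finset.coe_product, Set.mem_prod, Finset.mem_coe,
        Finset.mem_filter, Finset.mem_univ, true_and]
      rw [weight_eq hp hcard hm1, hw]
      constructor
      · intro h
        by_cases hb : b = 0
        · rw [if_pos hb] at h
          by_cases ha : a = 0
          · rw [if_pos ha] at h; omega
          · exact ⟨ha, hb⟩
        · rw [if_neg hb] at h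
          by_cases htr : Algebra.trace (ZMod p) F b = 0
          · rw [if_pos htr] at h; omega
          · rw [if_neg htr] at h; omega
      · rintro ⟨ha, hb⟩
        rw [if_pos hb, if_neg ha]
    rw [hEq, Set.ncard_coe_finset, card_product]
    have hc1 : (univ.filter fun a : ZMod p => a ≠ 0).card = p - 1 := by
      rw [Finset.filter_ne', Finset.card_erase_of_mem (mem_univ 0), card_univ, ZMod.card]
    have hc2 : (univ.filter fun b : F => b = 0).card = 1 := by
      rw [Finset.filter_eq', if_pos (mem_univ 0), Finset.card_singleton]
    rw [hc1, hc2, mul_one]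
  -- weight classification
  have part6 : ∀ (a : ZMod p) (b : F),
      hammingNorm (subfieldCodewordOne p F a b) = 0 ∨
      hammingNorm (subfieldCodewordOne p F a b) = (p - 1) * p ^ (m - 1) ∨
      hammingNorm (subfieldCodewordOne p F a b) = (p - 1) * p ^ (m - 1) + 1 ∨
      hammingNorm (subfieldCodewordOne p F a b) = p ^ m := by
    intro a b
    rw [weight_eq hp hcard hm1, hw]
    split_ifs <;> omega
  have part7 : ∀ (a : ZMod p) (b : F), ¬(a = 0 ∧ b = 0) →
      (p - 1) * p ^ (m - 1) ≤ hammingNorm (subfieldCodewordOne p F a b) := by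
    intro a b hab
    rw [weight_eq hp hcard hm1, hw]
    by_cases hb : b = 0
    · rw [if_pos hb]
      by_cases ha : a = 0
      · exact absurd ⟨ha, hb⟩ hab
      · rw [if_neg ha]; omega
    · rw [if_neg hb]
      by_cases htr : Algebra.trace (ZMod p) F b = 0
      · rw [if_pos htr]; omega
      · rw [if_neg htr]; omega
  exact ⟨part1, part2, part3, part4, part5, part6, part7⟩
end

section
/- Let p be a prime, l ≥ 2, and q = p^{2l}. The number of pairs (a,b) with a ∈ GF(p^l)*, b ∈ GF(q), satisfying Tr_{p^l/p}(b^{p^l+1}/a) = 0, Tr_{p^l/p}(a) = 0, and Tr_{q/p}(b) = 0, equals (p^{l−1}−1)(p^{2l−2}−p^l+p^{l−1}). -/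
/-!
Fix `a` and put `Q b = Tr_{p^l/p}(N b / a)`, `T b = Tr_{q/p}(b)` with `N b = b^{p^l+1}`. The norm
`N : F* → GF(p^l)*` has all fibres of size `p^l + 1` (it maps a set of size `(p^l-1)(p^l+1)` into
one of size at most `p^l - 1`, with fibres of size at most `p^l + 1`), and `u ↦ Tr(u / a)` has
`p^{l-1}` zeros in `GF(p^l)`, so `Q` has `1 + (p^{l-1} - 1)(p^l + 1)` zeros. If `Tr(a) = 0`, the
translation `b ↦ b + s a` (`s ∈ GF(p)`) fixes `T b` and adds `s · T b` to `Q b`; so for `τ ≠ 0`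
the zeros of `Q` are exactly a `1/p`-th of the `p^{2l-1}` points with `T = τ`. Subtracting these
leaves `p^{2l-2} - p^l + p^{l-1}` zeros of `Q` with `T = 0`, for each of the `p^{l-1} - 1`
admissible `a`.
-/

open Finset Polynomial

theorem Finset.card_eq_and_card_fiber_eq_of_le {α β : Type*} [DecidableEq β] {s : Finset α}
    {t : Finset β} {f : α → β} (hf : ∀ x ∈ s, f x ∈ t) {c d : ℕ} (hc : 0 < c)
    (hfib : ∀ u ∈ t, #{x ∈ s | f x = u} ≤ c) (ht : #t ≤ d) (hs : #s = d * c) :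
    #t = d ∧ ∀ u ∈ t, #{x ∈ s | f x = u} = c := by
  have hsum := card_eq_sum_card_fiberwise hf
  have hle : #s ≤ #t * c := by
    simpa only [← hsum, smul_eq_mul] using sum_le_card_nsmul t _ c hfib
  have hcard : #t = d := le_antisymm ht (Nat.le_of_mul_le_mul_right (hs ▸ hle) hc)
  refine ⟨hcard, (sum_eq_sum_iff_of_le hfib).1 ?_⟩
  rw [← hsum, sum_const, smul_eq_mul, hcard, hs]

theorem Finset.card_mul_card_filter_eq_of_translate {R M : Type*} [Ring R] [AddCommGroup M]
    [Module R M] [DecidableEq R] {P : Finset R} (hP : ∀ s ∈ P, ∀ t ∈ P, s - t ∈ P)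
    {D : Finset M} {g : M → R} {y : M} (hgP : ∀ x ∈ D, g x ∈ P)
    (hD : ∀ t ∈ P, ∀ x ∈ D, x + t • y ∈ D) (hg : ∀ t ∈ P, ∀ x ∈ D, g (x + t • y) = g x + t)
    {v : R} (hv : v ∈ P) :
    #P * #{x ∈ D | g x = v} = #D := by
  have hfiber : ∀ w ∈ P, #{x ∈ D | g x = w} = #{x ∈ D | g x = v} := by
    intro w hw
    have translate : ∀ s ∈ P, ∀ t ∈ P, ∀ x ∈ D, g x = t →
        x + (s - t) • y ∈ D ∧ g (x + (s - t) • y) = s := fun s hs t ht x hx hgx =>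
      ⟨hD _ (hP s hs t ht) x hx, by rw [hg _ (hP s hs t ht) x hx, hgx, add_sub_cancel]⟩
    apply card_nbij' (· + (v - w) • y) (· + (w - v) • y)
    · intro x hx
      simp only [coe_filter, Set.mem_ofPred_eq] at hx ⊢
      exact translate v hv w hw x hx.1 hx.2
    · intro x hx
      simp only [coe_filter, Set.mem_ofPred_eq] at hx ⊢
      exact translate w hw v hv x hx.1 hx.2
    · intro x _
      simp only [add_assoc, ← add_smul, sub_add_sub_cancel, sub_self, zero_smul, add_zero]
    · intro x _
      simp only [add_assoc, ← add_smul, sub_add_sub_cancel, sub_self, zero_smul, add_zero]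
  rw [card_eq_sum_card_fiberwise hgP, sum_congr rfl hfiber, sum_const, smul_eq_mul]

theorem Polynomial.card_filter_isRoot_le {R : Type*} [CommRing R] [IsDomain R] [Fintype R]
    [DecidableEq R] {f : R[X]} (hf : f ≠ 0) : #{x | f.IsRoot x} ≤ f.natDegree :=
  card_le_degree_of_subset_roots fun x hx => by simpa [mem_roots hf] using hx

def frobTrace {R : Type*} [CommRing R] (p m : ℕ) (x : R) : R := ∑ i ∈ range m, x ^ p ^ i

section frobTrace

variable {R : Type*} [CommRing R] {p : ℕ}

theorem frobTrace_two_mul (m : ℕ) (x : R) :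
    frobTrace p (2 * m) x = frobTrace p m x + frobTrace p m (x ^ p ^ m) := by
  simp only [frobTrace, two_mul, sum_range_add, ← pow_mul, ← pow_add]

theorem frobTrace_zero (hp : p ≠ 0) (m : ℕ) : frobTrace p m (0 : R) = 0 := by
  simp [frobTrace, hp]

theorem pow_char_pow_eq_self {s : R} (hs : s ^ p = s) (m : ℕ) : s ^ p ^ m = s := by
  induction m with
  | zero => simp
  | succ m ih => rw [pow_succ, pow_mul, ih, hs]

theorem frobTrace_mul_of_pow_char_eq {s : R} (hs : s ^ p = s) (m : ℕ) (x : R) :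
    frobTrace p m (s * x) = s * frobTrace p m x := by
  simp only [frobTrace, mul_pow, pow_char_pow_eq_self hs, mul_sum]

variable [Fact p.Prime] [CharP R p]

theorem frobTrace_add (m : ℕ) (x y : R) :
    frobTrace p m (x + y) = frobTrace p m x + frobTrace p m y := by
  simp only [frobTrace, add_pow_char_pow, sum_add_distrib]

theorem frobTrace_pow_char {m : ℕ} {x : R} (hx : x ^ p ^ m = x) :
    frobTrace p m x ^ p = frobTrace p m x := by
  -- the `p`-th power shifts the summands `x ^ p ^ i` by one, and `x ^ p ^ m = x` closes the cycle
  have hshift := sum_range_succ' (fun i => x ^ p ^ i) m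
  rw [sum_range_succ, hx, pow_zero, pow_one] at hshift
  simp only [frobTrace, sum_pow_char, ← pow_mul, ← pow_succ]
  exact add_right_cancel hshift.symm

end frobTrace

theorem exists_frobTrace_ne_zero {R : Type*} [CommRing R] [IsDomain R] {p m : ℕ} (hp : 1 < p)
    (hm : 0 < m) {S : Finset R} (hS : p ^ (m - 1) < #S) : ∃ x ∈ S, frobTrace p m x ≠ 0 := by
  by_contra! hzero
  set f : R[X] := ∑ i ∈ range m, X ^ p ^ i
  have hcoeff : f.coeff 1 = 1 := by
    rw [finsetSum_coeff, sum_eq_single_of_mem 0 (mem_range.2 hm)]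
    · simp
    · intro i _ hi
      rw [coeff_X_pow, if_neg (Nat.one_lt_pow hi hp).ne]
  have hf : f ≠ 0 := fun h => by simp [h] at hcoeff
  have hdeg : f.natDegree ≤ p ^ (m - 1) := by
    refine natDegree_sum_le_of_forall_le _ _ fun i hi => ?_
    rw [natDegree_X_pow]
    exact Nat.pow_le_pow_right (by omega) (by simp at hi; omega)
  have hroots : S.val ⊆ f.roots := fun x hx => by
    simpa [mem_roots hf, f, eval_finsetSum, frobTrace] using hzero x hx
  exact absurd ((card_le_degree_of_subset_roots hroots).trans hdeg) hS.not_ge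

section powFixed

variable {F : Type*} [Field F] [Fintype F] [DecidableEq F]

variable (F) in
/-- `powFixed F (p ^ l)` is the subfield `GF(p^l)`, and `powFixed F p` the prime field. -/
def powFixed (n : ℕ) : Finset F := {x | x ^ n = x}

@[simp]
theorem mem_powFixed {n : ℕ} {x : F} : x ∈ powFixed F n ↔ x ^ n = x := by
  simp [powFixed]

theorem powFixed_card_eq_univ : powFixed F (Fintype.card F) = univ := by
  ext x
  simp [FiniteField.pow_card]

theorem card_powFixed_le {n : ℕ} (hn : 1 < n) : #(powFixed F n) ≤ n := by
  have hroots := card_filter_isRoot_le (FiniteField.X_pow_card_sub_X_ne_zero F hn)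
  rw [FiniteField.X_pow_card_sub_X_natDegree_eq F hn] at hroots
  simpa [powFixed, sub_eq_zero] using hroots

variable (F) in
theorem card_powFixed_char (p : ℕ) [Fact p.Prime] [CharP F p] : #(powFixed F p) = p := by
  calc #(powFixed F p) = Nat.card (⊥ : Subfield F) := by
        rw [← Fintype.card_coe, ← Nat.card_eq_fintype_card]
        exact Nat.card_congr <| Equiv.subtypeEquivRight fun x =>
          mem_powFixed.trans (Subfield.mem_bot_iff_pow_eq_self F p).symm
    _ = p := Subfield.card_bot F p

end powFixed

section PrimeField

variable {F : Type*} [Field F] [Fintype F] [DecidableEq F] {p : ℕ} [Fact p.Prime] [CharP F p]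

theorem card_mul_card_filter_frobTrace_eq {m : ℕ} (hm : 0 < m)
    (hK : p ^ (m - 1) < #(powFixed F (p ^ m))) {τ : F} (hτ : τ ^ p = τ) :
    p * #{x ∈ powFixed F (p ^ m) | frobTrace p m x = τ} = #(powFixed F (p ^ m)) := by
  obtain ⟨x₀, hx₀, hc⟩ := exists_frobTrace_ne_zero (Fact.out : p.Prime).one_lt hm hK
  set c := frobTrace p m x₀
  rw [mem_powFixed] at hx₀
  have hcp : c ^ p = c := frobTrace_pow_char hx₀
  have hscale : ∀ t ∈ powFixed F p, (t * c⁻¹) ^ p = t * c⁻¹ := fun t ht => by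
    rw [mul_pow, inv_pow, mem_powFixed.1 ht, hcp]
  suffices #(powFixed F p) * #{x ∈ powFixed F (p ^ m) | frobTrace p m x = τ} =
      #(powFixed F (p ^ m)) by rwa [card_powFixed_char F p] at this
  refine card_mul_card_filter_eq_of_translate (y := c⁻¹ * x₀) ?_ ?_ ?_ ?_ (mem_powFixed.2 hτ)
  · intro s hs t ht
    rw [mem_powFixed, sub_pow_char, mem_powFixed.1 hs, mem_powFixed.1 ht]
  · intro x hx
    exact mem_powFixed.2 (frobTrace_pow_char (mem_powFixed.1 hx))
  · intro t ht x hx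
    rw [mem_powFixed, smul_eq_mul, ← mul_assoc, add_pow_char_pow, mul_pow,
      pow_char_pow_eq_self (hscale t ht), hx₀, mem_powFixed.1 hx]
  · intro t ht x _
    rw [smul_eq_mul, ← mul_assoc, frobTrace_add, frobTrace_mul_of_pow_char_eq (hscale t ht),
      inv_mul_cancel_right₀ hc]

end PrimeField

section QuadraticExtension

variable {F : Type*} [Field F] [Fintype F] [DecidableEq F] {p l : ℕ}

theorem pow_pow_add_one_mem_powFixed (hcard : Fintype.card F = p ^ (2 * l)) (b : F) :
    b ^ (p ^ l + 1) ∈ powFixed F (p ^ l) := by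
  have hfrob : b ^ (p ^ l * p ^ l) = b := by
    rw [← pow_add, ← two_mul, ← hcard, FiniteField.pow_card]
  rw [mem_powFixed, ← pow_mul, add_one_mul, pow_add, hfrob, pow_succ']

theorem card_powFixed_and_card_norm_fiber [Fact p.Prime] (hl : 0 < l)
    (hcard : Fintype.card F = p ^ (2 * l)) :
    #(powFixed F (p ^ l)) = p ^ l ∧
      ∀ u ∈ powFixed F (p ^ l), u ≠ 0 → #{b | b ^ (p ^ l + 1) = u} = p ^ l + 1 := by
  have hq : 1 < p ^ l := Nat.one_lt_pow hl.ne' (Fact.out : p.Prime).one_lt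
  have hzero : (0 : F) ∈ powFixed F (p ^ l) := mem_powFixed.2 (zero_pow (by omega))
  have hcount := card_eq_and_card_fiber_eq_of_le (s := univ.erase (0 : F))
    (t := (powFixed F (p ^ l)).erase 0) (f := (· ^ (p ^ l + 1))) (c := p ^ l + 1) (d := p ^ l - 1)
    (fun b hb => mem_erase.2 ⟨pow_ne_zero _ (ne_of_mem_erase hb),
      pow_pow_add_one_mem_powFixed hcard b⟩)
    (by omega)
    (fun u _ => by
      refine (card_le_card fun b hb => ?_).trans <|
        (card_filter_isRoot_le (X_pow_sub_C_ne_zero (by omega) u)).trans natDegree_X_pow_sub_C.le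
      simp_all [sub_eq_zero])
    (by rw [card_erase_of_mem hzero]; exact Nat.sub_le_sub_right (card_powFixed_le hq) 1)
    (by rw [card_erase_of_mem (mem_univ 0), card_univ, hcard, two_mul, pow_add,
      mul_self_tsub_one, mul_comm])
  obtain ⟨hK, hfiber⟩ := hcount
  refine ⟨by rw [card_erase_of_mem hzero] at hK; omega, fun u hu hu0 => ?_⟩
  have hnonzero : {b ∈ univ.erase (0 : F) | b ^ (p ^ l + 1) = u} =
      ({b | b ^ (p ^ l + 1) = u} : Finset F) := by
    ext b
    simp only [mem_filter, mem_univ, mem_erase, true_and, and_true, and_iff_right_iff_imp]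
    rintro hb rfl
    exact hu0 (by simpa using hb.symm)
  rw [← hnonzero]
  exact hfiber u (mem_erase.2 ⟨hu0, hu⟩)

variable [Fact p.Prime] [CharP F p]

theorem card_filter_frobTrace_powFixed_eq_zero (hl : 0 < l)
    (hcard : Fintype.card F = p ^ (2 * l)) :
    #{x ∈ powFixed F (p ^ l) | frobTrace p l x = 0} = p ^ (l - 1) := by
  have hp := (Fact.out : p.Prime)
  have hK := (card_powFixed_and_card_norm_fiber hl hcard).1
  have key := card_mul_card_filter_frobTrace_eq hl
    (by rw [hK]; exact Nat.pow_lt_pow_right hp.one_lt (by omega)) (zero_pow hp.ne_zero)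
  rw [hK] at key
  exact Nat.eq_of_mul_eq_mul_left hp.pos (key.trans (mul_pow_sub_one hl.ne' p).symm)

theorem card_filter_powFixed_ne_zero_and_frobTrace_eq_zero (hl : 0 < l)
    (hcard : Fintype.card F = p ^ (2 * l)) :
    #{a ∈ powFixed F (p ^ l) | a ≠ 0 ∧ frobTrace p l a = 0} = p ^ (l - 1) - 1 := by
  have hp := (Fact.out : p.Prime)
  have hzero : (0 : F) ∈ {a ∈ powFixed F (p ^ l) | frobTrace p l a = 0} :=
    mem_filter.2 ⟨mem_powFixed.2 (zero_pow (pow_ne_zero _ hp.ne_zero)),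
      frobTrace_zero hp.ne_zero l⟩
  rw [← card_filter_frobTrace_powFixed_eq_zero hl hcard, ← card_erase_of_mem hzero]
  congr 1
  ext a
  simp [and_left_comm]

theorem card_filter_frobTrace_eq (hl : 0 < l) (hcard : Fintype.card F = p ^ (2 * l)) {τ : F}
    (hτ : τ ^ p = τ) : p * #{x | frobTrace p (2 * l) x = τ} = p ^ (2 * l) := by
  have hp := (Fact.out : p.Prime)
  have key := card_mul_card_filter_frobTrace_eq (F := F) (m := 2 * l) (by omega)
    (by rw [← hcard, powFixed_card_eq_univ, card_univ, hcard]
        exact Nat.pow_lt_pow_right hp.one_lt (by omega)) hτ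
  rw [← hcard, powFixed_card_eq_univ, card_univ] at key
  rwa [← hcard]

theorem frobTrace_add_mul_pow_div {a : F} (ha : a ∈ powFixed F (p ^ l)) (ha0 : a ≠ 0)
    (hatr : frobTrace p l a = 0) {s : F} (hs : s ^ p = s) (b : F) :
    frobTrace p l ((b + s * a) ^ (p ^ l + 1) / a) =
      frobTrace p l (b ^ (p ^ l + 1) / a) + s * frobTrace p (2 * l) b := by
  have hexpand : (b + s * a) ^ (p ^ l + 1) / a =
      b ^ (p ^ l + 1) / a + s * (b + b ^ p ^ l) + s * s * a := by
    rw [pow_succ, add_pow_char_pow, mul_pow, pow_char_pow_eq_self hs, mem_powFixed.1 ha]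
    field_simp
    ring
  rw [hexpand, frobTrace_add, frobTrace_add, frobTrace_mul_of_pow_char_eq hs,
    frobTrace_mul_of_pow_char_eq (by rw [mul_pow, hs]), hatr, mul_zero, add_zero, frobTrace_add,
    ← frobTrace_two_mul]

theorem card_filter_frobTrace_pow_div_eq_zero (hl : 0 < l)
    (hcard : Fintype.card F = p ^ (2 * l)) {a : F} (ha : a ∈ powFixed F (p ^ l)) (ha0 : a ≠ 0) :
    #{b | frobTrace p l (b ^ (p ^ l + 1) / a) = 0} = 1 + (p ^ (l - 1) - 1) * (p ^ l + 1) := by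
  have hq : p ^ l ≠ 0 := pow_ne_zero _ (Fact.out : p.Prime).ne_zero
  set V := {u ∈ powFixed F (p ^ l) | frobTrace p l (u / a) = 0}
  have hV : #V = p ^ (l - 1) := by
    rw [← card_filter_frobTrace_powFixed_eq_zero hl hcard]
    refine card_nbij' (· / a) (· * a) (fun u hu => ?_) (fun v hv => ?_)
      (fun u _ => div_mul_cancel₀ u ha0) (fun v _ => mul_div_cancel_right₀ v ha0)
    · simp only [V, coe_filter, mem_powFixed, Set.mem_ofPred_eq] at hu ⊢
      exact ⟨by rw [div_pow, hu.1, mem_powFixed.1 ha], hu.2⟩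
    · simp only [V, coe_filter, mem_powFixed, Set.mem_ofPred_eq] at hv ⊢
      refine ⟨by rw [mul_pow, hv.1, mem_powFixed.1 ha], ?_⟩
      rw [mul_div_cancel_right₀ v ha0]
      exact hv.2
  have hzero : (0 : F) ∈ V :=
    mem_filter.2 ⟨mem_powFixed.2 (zero_pow hq),
      by rw [zero_div, frobTrace_zero (Fact.out : p.Prime).ne_zero]⟩
  have hnorm : ∀ b ∈ ({b | frobTrace p l (b ^ (p ^ l + 1) / a) = 0} : Finset F),
      b ^ (p ^ l + 1) ∈ V := fun b hb =>
    mem_filter.2 ⟨pow_pow_add_one_mem_powFixed hcard b, (mem_filter.1 hb).2⟩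
  have hfiber : ∀ u ∈ V, #{b ∈ ({b | frobTrace p l (b ^ (p ^ l + 1) / a) = 0} : Finset F) |
      b ^ (p ^ l + 1) = u} = #{b | b ^ (p ^ l + 1) = u} := fun u hu => by
    rw [filter_filter]
    exact congrArg _ <| filter_congr fun b _ =>
      ⟨And.right, fun hbu => ⟨by rw [hbu]; exact (mem_filter.1 hu).2, hbu⟩⟩
  have hfiber_zero : #{b : F | b ^ (p ^ l + 1) = 0} = 1 := by
    simp [pow_eq_zero_iff, filter_eq']
  rw [card_eq_sum_card_fiberwise hnorm, sum_congr rfl hfiber, ← add_sum_erase _ _ hzero,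
    hfiber_zero, sum_congr rfl fun u hu => (card_powFixed_and_card_norm_fiber hl hcard).2 u
      (mem_filter.1 (mem_of_mem_erase hu)).1 (ne_of_mem_erase hu),
    sum_const, card_erase_of_mem hzero, hV, smul_eq_mul]

theorem card_filter_frobTrace_pow_div_eq_zero_and_eq (hl : 0 < l)
    (hcard : Fintype.card F = p ^ (2 * l)) {a : F} (ha : a ∈ powFixed F (p ^ l)) (ha0 : a ≠ 0)
    (hatr : frobTrace p l a = 0) {τ : F} (hτ : τ ^ p = τ) (hτ0 : τ ≠ 0) :
    p * p * #{b | frobTrace p l (b ^ (p ^ l + 1) / a) = 0 ∧ frobTrace p (2 * l) b = τ} =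
      p ^ (2 * l) := by
  have hscale : ∀ t ∈ powFixed F p, (t * τ⁻¹) ^ p = t * τ⁻¹ := fun t ht => by
    rw [mul_pow, inv_pow, mem_powFixed.1 ht, hτ]
  have htrace_a : frobTrace p (2 * l) a = 0 := by
    rw [frobTrace_two_mul, mem_powFixed.1 ha, hatr, add_zero]
  have key := card_mul_card_filter_eq_of_translate (P := powFixed F p)
    (D := {b | frobTrace p (2 * l) b = τ}) (g := fun b => frobTrace p l (b ^ (p ^ l + 1) / a))
    (y := τ⁻¹ * a) (v := 0)
    (fun s hs t ht => by rw [mem_powFixed, sub_pow_char, mem_powFixed.1 hs, mem_powFixed.1 ht])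
    (fun b _ => mem_powFixed.2 <| frobTrace_pow_char <| by
      rw [div_pow, mem_powFixed.1 (pow_pow_add_one_mem_powFixed hcard b), mem_powFixed.1 ha])
    (fun t ht b hb => by
      rw [smul_eq_mul, ← mul_assoc, mem_filter, frobTrace_add,
        frobTrace_mul_of_pow_char_eq (hscale t ht), htrace_a, mul_zero, add_zero]
      exact ⟨mem_univ _, (mem_filter.1 hb).2⟩)
    (fun t ht b hb => by
      rw [smul_eq_mul, ← mul_assoc, frobTrace_add_mul_pow_div ha ha0 hatr (hscale t ht),
        (mem_filter.1 hb).2, inv_mul_cancel_right₀ hτ0])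
    (mem_powFixed.2 (zero_pow (Fact.out : p.Prime).ne_zero))
  rw [card_powFixed_char F p, filter_filter] at key
  simp_rw [and_comm (a := frobTrace p (2 * l) _ = τ)] at key
  rw [mul_assoc, key, card_filter_frobTrace_eq hl hcard hτ]

theorem eq_pow_sub_pow_add_pow_of_add_eq {p l x : ℕ} (hp : 0 < p) (hl : 2 ≤ l)
    (h : 1 + (p ^ (l - 1) - 1) * (p ^ l + 1) = x + (p - 1) * p ^ (2 * l - 2)) :
    x = p ^ (2 * l - 2) - p ^ l + p ^ (l - 1) := by
  obtain ⟨k, rfl⟩ : ∃ k, l = k + 1 := ⟨l - 1, by omega⟩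
  have hsq : p ^ (2 * (k + 1) - 2) = p ^ k * p ^ k := by rw [← pow_add]; congr 1; omega
  rw [Nat.add_sub_cancel, hsq, pow_succ'] at h ⊢
  have hu : p ≤ p ^ k := Nat.le_self_pow (by omega) p
  have hpu : p * p ^ k ≤ p ^ k * p ^ k := Nat.mul_le_mul_right _ hu
  zify [hp, hu.trans' hp, hpu] at h ⊢
  linear_combination -h

theorem card_filter_frobTrace_pow_div_eq_zero_and_eq_zero (hl : 2 ≤ l)
    (hcard : Fintype.card F = p ^ (2 * l)) {a : F} (ha : a ∈ powFixed F (p ^ l)) (ha0 : a ≠ 0)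
    (hatr : frobTrace p l a = 0) :
    #{b | frobTrace p l (b ^ (p ^ l + 1) / a) = 0 ∧ frobTrace p (2 * l) b = 0} =
      p ^ (2 * l - 2) - p ^ l + p ^ (l - 1) := by
  have hp := (Fact.out : p.Prime)
  have hsplit := card_eq_sum_card_fiberwise (s := {b | frobTrace p l (b ^ (p ^ l + 1) / a) = 0})
    (t := powFixed F p) (f := frobTrace p (2 * l))
    (fun b _ => mem_powFixed.2 (frobTrace_pow_char (by
      rw [← hcard]; exact FiniteField.pow_card b)))
  have hfiber : ∀ τ ∈ (powFixed F p).erase 0,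
      #{b ∈ ({b | frobTrace p l (b ^ (p ^ l + 1) / a) = 0} : Finset F) |
        frobTrace p (2 * l) b = τ} = p ^ (2 * l - 2) := fun τ hτ => by
    apply Nat.eq_of_mul_eq_mul_left (Nat.mul_pos hp.pos hp.pos)
    rw [filter_filter, card_filter_frobTrace_pow_div_eq_zero_and_eq (by omega) hcard ha ha0 hatr
      (mem_powFixed.1 (mem_of_mem_erase hτ)) (ne_of_mem_erase hτ), ← pow_two, ← pow_add]
    congr 1
    omega
  rw [card_filter_frobTrace_pow_div_eq_zero (by omega) hcard ha ha0,
    ← add_sum_erase _ _ (mem_powFixed.2 (zero_pow hp.ne_zero)), sum_congr rfl hfiber, sum_const,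
    card_erase_of_mem (mem_powFixed.2 (zero_pow hp.ne_zero)), card_powFixed_char F p,
    filter_filter, smul_eq_mul] at hsplit
  exact eq_pow_sub_pow_add_pow_of_add_eq hp.pos hl hsplit

end QuadraticExtension

/-- Let `p` be a prime, `l ≥ 2`, `q = p^{2l}`, and `F = GF(q)`.  The subfield `GF(p^l)` is
identified with `{u : F // u^{p^l} = u}`, `Tr_{p^l/p}(u) = Σ_{i<l} u^{p^i}` and
`Tr_{q/p}(x) = Σ_{i<2l} x^{p^i}`.  The number of pairs `(a,b)` with `a ∈ GF(p^l)*`,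
`b ∈ GF(q)`, satisfying `Tr_{p^l/p}(b^{p^l+1}/a) = 0`, `Tr_{p^l/p}(a) = 0` and
`Tr_{q/p}(b) = 0` equals `(p^{l−1}−1)(p^{2l−2}−p^l+p^{l−1})`. -/
theorem stmt4 (p l : ℕ) (hp : p.Prime) (hl : 2 ≤ l) (F : Type*) [Field F] [Fintype F]
    (hcard : Fintype.card F = p ^ (2 * l)) :
    Set.ncard {ab : F × F |
        ab.1 ≠ 0 ∧ ab.1 ^ p ^ l = ab.1 ∧
        (∑ i ∈ Finset.range l, (ab.2 ^ (p ^ l + 1) / ab.1) ^ p ^ i) = 0 ∧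
        (∑ i ∈ Finset.range l, ab.1 ^ p ^ i) = 0 ∧
        (∑ i ∈ Finset.range (2 * l), ab.2 ^ p ^ i) = 0} =
      (p ^ (l - 1) - 1) * (p ^ (2 * l - 2) - p ^ l + p ^ (l - 1)) := by
  classical
  have : Fact p.Prime := ⟨hp⟩
  have : CharP F p := charP_of_card_eq_prime_pow hcard
  set A : Finset F := {a ∈ powFixed F (p ^ l) | a ≠ 0 ∧ frobTrace p l a = 0}
  have hset : {ab : F × F |
        ab.1 ≠ 0 ∧ ab.1 ^ p ^ l = ab.1 ∧
        (∑ i ∈ Finset.range l, (ab.2 ^ (p ^ l + 1) / ab.1) ^ p ^ i) = 0 ∧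
        (∑ i ∈ Finset.range l, ab.1 ^ p ^ i) = 0 ∧
        (∑ i ∈ Finset.range (2 * l), ab.2 ^ p ^ i) = 0} =
      ↑({ab ∈ A ×ˢ (univ : Finset F) | frobTrace p l (ab.2 ^ (p ^ l + 1) / ab.1) = 0 ∧
        frobTrace p (2 * l) ab.2 = 0} : Finset (F × F)) := by
    ext ⟨a, b⟩
    rw [Set.mem_ofPred_eq, mem_coe, mem_filter, mem_product, mem_filter, mem_powFixed]
    simp only [frobTrace, mem_univ, and_true]
    tauto
  rw [hset, Set.ncard_coe_finset, card_filter, sum_product]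
  simp_rw [← card_filter]
  rw [sum_congr rfl fun a ha => by
      obtain ⟨ha, ha0, hatr⟩ := mem_filter.1 ha
      exact card_filter_frobTrace_pow_div_eq_zero_and_eq_zero hl hcard ha ha0 hatr,
    sum_const, smul_eq_mul,
    card_filter_powFixed_ne_zero_and_frobTrace_eq_zero (by omega) hcard]
end

section
/- Let p be a prime, l ≥ 2, and q = p^{2l}. The number of pairs (a,b) with a ∈ GF(p^l)*, b ∈ GF(q), satisfying Tr_{p^l/p}(b^{p^l+1}/a) ≠ 0, Tr_{p^l/p}(a) = 0, and Tr_{q/p}(b) = 0, equals (p−1)(p^{l−1}−1)(p^{2l−2}+p^{l−1}). -/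
set_option linter.unusedSectionVars false
open Finset Polynomial

attribute [local instance] Classical.propDecidable

section Basics

variable {F : Type*} [Field F] [Fintype F]

/-- root bound: a nonzero polynomial vanishes at most natDegree points -/
lemma myRootBound (g : F[X]) (hg : g ≠ 0) :
    (univ.filter fun x : F => g.eval x = 0).card ≤ g.natDegree := by
  calc (univ.filter fun x : F => g.eval x = 0).card
      ≤ g.roots.toFinset.card := Finset.card_le_card (by
        intro x hx
        simp only [mem_filter, mem_univ, true_and] at hx
        simp [Multiset.mem_toFinset, mem_roots', hg, IsRoot, hx])
    _ ≤ Multiset.card g.roots := g.roots.toFinset_card_le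
    _ ≤ g.natDegree := g.card_roots'

/-- composing a predicate with a bijection preserves the count -/
lemma myCardComp (e : F → F) (he : Function.Bijective e) (Q : F → Prop) :
    (univ.filter fun x => Q (e x)).card = (univ.filter Q).card := by
  apply Finset.card_nbij e
  · intro a ha
    simp only [coe_filter, Set.mem_setOf_eq, mem_filter, mem_univ, true_and] at ha ⊢
    exact ha
  · exact he.injective.injOn
  · intro y hy
    simp only [coe_filter, Set.mem_setOf_eq, mem_univ, true_and] at hy
    obtain ⟨x, rfl⟩ := he.surjective y
    exact ⟨x, by simp [hy], rfl⟩

lemma myFib (f : F → F) (hf : ∀ x y : F, f (x + y) = f x + f y) (x0 : F) :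
    (univ.filter fun x => f x = f x0).card = (univ.filter fun x => f x = 0).card := by
  have := myCardComp (fun y => y + x0) (Equiv.addRight x0).bijective
    (fun x => f x = f x0)
  rw [← this]
  congr 1
  ext y
  simp only [mem_filter, mem_univ, true_and, hf]
  constructor
  · intro h; simpa using h
  · intro h; simp [h]

lemma mySumFib (f : F → F) (hf : ∀ x y : F, f (x + y) = f x + f y) :
    Fintype.card F = (univ.image f).card * (univ.filter fun x => f x = 0).card := by
  have h := Finset.card_eq_sum_card_fiberwise
    (s := (univ : Finset F)) (t := univ.image f) (f := f)
    (fun x _ => mem_image_of_mem f (mem_univ x))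
  rw [← Finset.card_univ, h, Finset.sum_congr rfl, Finset.sum_const, smul_eq_mul]
  intro y hy
  obtain ⟨x0, _, rfl⟩ := Finset.mem_image.mp hy
  exact myFib f hf x0

lemma mySqueeze {a b A B : ℕ} (ha : a ≤ A) (hb : b ≤ B) (h : a * b = A * B)
    (hA : 0 < A) (hB : 0 < B) : a = A ∧ b = B := by
  constructor <;> nlinarith [Nat.mul_le_mul ha hb]

end Basics
section S2
variable {F : Type*} [Field F] [Fintype F]
variable {F : Type*} [Field F] [Fintype F]

-- specialized bounds
lemma traceKerBound {p : ℕ} (hp2 : 2 ≤ p) (n : ℕ) (hn : 1 ≤ n) :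
    (univ.filter fun x : F => ∑ i ∈ range n, x ^ p ^ i = 0).card ≤ p ^ (n - 1) := by
  have key := myRootBound (F := F) (∑ i ∈ range n, X ^ p ^ i) ?_
  · refine le_trans (le_of_eq ?_) (key.trans ?_)
    · congr 1; ext x; simp [eval_finset_sum]
    · apply natDegree_sum_le_of_forall_le
      intro i hi
      rw [natDegree_X_pow]
      exact Nat.pow_le_pow_right (by omega) (by simp at hi; omega)
  · intro hzero
    have h1 : (∑ i ∈ range n, (X : F[X]) ^ p ^ i).coeff 1 = 1 := by
      rw [finset_sum_coeff]
      rw [Finset.sum_eq_single 0]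
      · simp
      · intro i hi hne
        rw [coeff_X_pow, if_neg]
        intro h
        exact absurd h.symm (Nat.one_lt_pow hne (by omega)).ne'
      · simp; omega
    rw [hzero] at h1
    simp at h1

lemma subfieldBound {p : ℕ} (N : ℕ) (hN : 2 ≤ N) :
    (univ.filter fun x : F => x ^ N = x).card ≤ N := by
  have key := myRootBound (F := F) (X ^ N - X) ?_
  · refine le_trans (le_of_eq ?_) (key.trans ?_)
    · congr 1; ext x; simp [sub_eq_zero]
    · exact (natDegree_sub_le _ _).trans (by simp; omega)
  · intro hzero
    have h1 : ((X : F[X]) ^ N - X).coeff 1 = -1 := by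
      rw [coeff_sub, coeff_X_pow, coeff_X_one]
      simp; omega
    rw [hzero] at h1
    simp at h1

lemma psiKerBound {p : ℕ} (N : ℕ) (hN : 2 ≤ N) :
    (univ.filter fun x : F => x ^ N + x = 0).card ≤ N := by
  have key := myRootBound (F := F) (X ^ N + X) ?_
  · refine le_trans (le_of_eq ?_) (key.trans ?_)
    · congr 1; ext x; simp
    · exact (natDegree_add_le _ _).trans (by simp; omega)
  · intro hzero
    have h1 : ((X : F[X]) ^ N + X).coeff 1 = 1 := by
      rw [coeff_add, coeff_X_pow, coeff_X_one]
      simp; omega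
    rw [hzero] at h1
    simp at h1

lemma unityBound {p : ℕ} (N : ℕ) (hN : 1 ≤ N) :
    (univ.filter fun x : F => x ^ N = 1).card ≤ N := by
  have key := myRootBound (F := F) (X ^ N - 1) ?_
  · refine le_trans (le_of_eq ?_) (key.trans ?_)
    · congr 1; ext x; simp [sub_eq_zero]
    · exact (natDegree_sub_le _ _).trans (by simp)
  · intro hzero
    have h1 : ((X : F[X]) ^ N - 1).coeff 0 = -1 := by
      rw [coeff_sub, coeff_X_pow]
      simp; omega
    rw [hzero] at h1
    simp at h1

end S2
section S3

variable {F : Type*} [Field F] [Fintype F] {p l : ℕ} [hpf : Fact p.Prime] [CharP F p]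

/-- trace-like sum -/
def trS (p n : ℕ) (x : F) : F := ∑ i ∈ Finset.range n, x ^ p ^ i

lemma trS_add (n : ℕ) (x y : F) : trS p n (x + y) = trS p n x + trS p n y := by
  unfold trS
  rw [← Finset.sum_add_distrib]
  exact Finset.sum_congr rfl fun i _ => add_pow_char_pow x y p i

lemma trS_sub (n : ℕ) (x y : F) : trS p n (x - y) = trS p n x - trS p n y := by
  unfold trS
  rw [← Finset.sum_sub_distrib]
  exact Finset.sum_congr rfl fun i _ => sub_pow_char_pow x y i

lemma trS_zero (n : ℕ) : trS p n (0 : F) = 0 := by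
  unfold trS
  apply Finset.sum_eq_zero
  intro i _
  exact zero_pow (pow_ne_zero i hpf.out.pos.ne')

lemma pinP_pow {t : F} (ht : t ^ p = t) (i : ℕ) : t ^ p ^ i = t := by
  induction i with
  | zero => simp
  | succ k ih => rw [pow_succ, pow_mul, ih, ht]

lemma trS_smul (n : ℕ) {t : F} (ht : t ^ p = t) (x : F) :
    trS p n (t * x) = t * trS p n x := by
  unfold trS
  rw [Finset.mul_sum]
  exact Finset.sum_congr rfl fun i _ => by rw [mul_pow, pinP_pow ht]

lemma trS_pow_p (n : ℕ) {x : F} (hx : x ^ p ^ n = x) : (trS p n x) ^ p = trS p n x := by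
  unfold trS
  rw [sum_pow_char]
  have h1 : ∀ i : ℕ, (x ^ p ^ i) ^ p = x ^ p ^ (i + 1) := fun i => by
    rw [← pow_mul, ← pow_succ]
  calc ∑ i ∈ Finset.range n, (x ^ p ^ i) ^ p
      = ∑ i ∈ Finset.range n, x ^ p ^ (i + 1) := Finset.sum_congr rfl fun i _ => h1 i
    _ = ∑ i ∈ Finset.range (n + 1), x ^ p ^ i - x ^ p ^ 0 := by
        rw [Finset.sum_range_succ']; ring
    _ = ∑ i ∈ Finset.range n, x ^ p ^ i := by
        rw [Finset.sum_range_succ, hx]; simp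

/-- the full trace is the half trace of ψ x = x^(p^l) + x -/
lemma trF_eq_trS_psi (hF : ∀ x : F, x ^ p ^ (2 * l) = x) (x : F) :
    trS p (2 * l) x = trS p l (x ^ p ^ l + x) := by
  unfold trS
  have h2 : (2 : ℕ) * l = l + l := by ring
  rw [h2, Finset.sum_range_add]
  have : ∀ i ∈ Finset.range l, (x ^ p ^ l + x) ^ p ^ i = x ^ p ^ (l + i) + x ^ p ^ i := by
    intro i _
    rw [add_pow_char_pow, ← pow_mul, ← pow_add]
  rw [Finset.sum_congr rfl this, Finset.sum_add_distrib]
  ring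

lemma norm_mem_K (hF : ∀ x : F, x ^ p ^ (2 * l) = x) (b : F) :
    (b ^ (p ^ l + 1)) ^ p ^ l = b ^ (p ^ l + 1) := by
  rw [← pow_mul]
  have : (p ^ l + 1) * p ^ l = p ^ (2 * l) + p ^ l := by ring
  rw [this, pow_add, hF b, mul_comm, pow_add, pow_one]

lemma inv_mem_K {a : F} (haK : a ^ p ^ l = a) : (a⁻¹) ^ p ^ l = a⁻¹ := by
  rw [inv_pow, haK]

lemma psi_mem_K (hF : ∀ x : F, x ^ p ^ (2 * l) = x) (x : F) :
    (x ^ p ^ l + x) ^ p ^ l = x ^ p ^ l + x := by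
  have h1 : (x ^ p ^ l) ^ p ^ l = x := by
    rw [← pow_mul, ← pow_add, ← two_mul, hF]
  rw [add_pow_char_pow, h1]
  ring

end S3
section S4
open Finset
variable {F : Type*} [Field F] [Fintype F] {p l : ℕ} [hpf : Fact p.Prime] [CharP F p]

lemma cardP (hl : 2 ≤ l) (hcard : Fintype.card F = p ^ (2 * l)) :
    (univ.filter fun x : F => x ^ p = x).card = p := by
  refine le_antisymm (subfieldBound (p := p) p hpf.out.two_le) ?_
  have h2 : Fintype.card (ZMod p) ≤ (univ.filter fun x : F => x ^ p = x).card := by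
    rw [← Finset.card_univ]
    apply Finset.card_le_card_of_injOn (fun k : ZMod p => ZMod.castHom dvd_rfl F k)
    · intro k _
      simp only [coe_filter, Set.mem_setOf_eq, mem_filter, mem_univ, true_and]
      rw [← map_pow, ZMod.pow_card]
    · exact (ZMod.castHom_injective F).injOn
  calc p = Fintype.card (ZMod p) := (ZMod.card p).symm
  _ ≤ _ := h2

lemma kFacts (hl : 2 ≤ l) (hF : ∀ x : F, x ^ p ^ (2 * l) = x)
    (hcard : Fintype.card F = p ^ (2 * l)) :
    (univ.filter fun x : F => x ^ p ^ l = x).card = p ^ l ∧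
    univ.image (fun x : F => x ^ p ^ l + x) = (univ.filter fun x : F => x ^ p ^ l = x) ∧
    (univ.filter fun x : F => x ^ p ^ l + x = 0).card = p ^ l := by
  have hp2 : 2 ≤ p ^ l := by
    calc 2 ≤ p := hpf.out.two_le
    _ = p ^ 1 := (pow_one p).symm
    _ ≤ p ^ l := Nat.pow_le_pow_right hpf.out.pos (by omega)
  set ψ : F → F := fun x => x ^ p ^ l + x with hψ
  have hψadd : ∀ x y : F, ψ (x + y) = ψ x + ψ y := by
    intro x y
    simp only [hψ]
    rw [add_pow_char_pow]
    ring
  have hsum := mySumFib ψ hψadd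
  have hker_le : (univ.filter fun x : F => ψ x = 0).card ≤ p ^ l :=
    psiKerBound (p := p) (p ^ l) hp2
  have himK : univ.image ψ ⊆ (univ.filter fun x : F => x ^ p ^ l = x) := by
    intro y hy
    obtain ⟨x, _, rfl⟩ := Finset.mem_image.mp hy
    simp only [mem_filter, mem_univ, true_and, hψ]
    exact psi_mem_K hF x
  have hK_le : (univ.filter fun x : F => x ^ p ^ l = x).card ≤ p ^ l :=
    subfieldBound (p := p) (p ^ l) hp2
  have him_le : (univ.image ψ).card ≤ p ^ l :=
    le_trans (Finset.card_le_card himK) hK_le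
  have hprod : (univ.image ψ).card * (univ.filter fun x : F => ψ x = 0).card
      = p ^ l * p ^ l := by
    rw [← hsum, hcard, ← pow_add, two_mul]
  obtain ⟨him, hker⟩ := mySqueeze him_le hker_le hprod (pow_pos hpf.out.pos _) (pow_pos hpf.out.pos _)
  have hKcard : (univ.filter fun x : F => x ^ p ^ l = x).card = p ^ l := by
    refine le_antisymm hK_le ?_
    calc p ^ l = (univ.image ψ).card := him.symm
    _ ≤ _ := Finset.card_le_card himK
  refine ⟨hKcard, ?_, hker⟩
  exact Finset.eq_of_subset_of_card_le himK (by rw [hKcard, him])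

lemma trFKer (hl : 2 ≤ l) (hF : ∀ x : F, x ^ p ^ (2 * l) = x)
    (hcard : Fintype.card F = p ^ (2 * l)) :
    (univ.filter fun x : F => trS p (2 * l) x = 0).card = p ^ (2 * l - 1) := by
  have hadd := trS_add (F := F) (p := p) (2 * l)
  have hsum := mySumFib (trS p (2 * l)) hadd
  have hker_le : (univ.filter fun x : F => trS p (2 * l) x = 0).card ≤ p ^ (2 * l - 1) := by
    have := traceKerBound (F := F) hpf.out.two_le (2 * l) (by omega)
    convert this using 3 <;> simp [trS]
  have him_le : (univ.image (trS (F := F) p (2 * l))).card ≤ p := by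
    calc (univ.image (trS (F := F) p (2 * l))).card
        ≤ (univ.filter fun x : F => x ^ p = x).card := by
          apply Finset.card_le_card
          intro y hy
          obtain ⟨x, _, rfl⟩ := Finset.mem_image.mp hy
          simp only [mem_filter, mem_univ, true_and]
          exact trS_pow_p (2 * l) (hF x)
      _ = p := cardP hl hcard
  have hprod : (univ.image (trS (F := F) p (2 * l))).card
      * (univ.filter fun x : F => trS p (2 * l) x = 0).card = p * p ^ (2 * l - 1) := by
    rw [← hsum, hcard, ← pow_succ']
    congr 1
    omega
  obtain ⟨_, hker⟩ := mySqueeze him_le hker_le hprod hpf.out.pos (pow_pos hpf.out.pos _)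
  exact hker

lemma psiKerCard (hl : 2 ≤ l) (hF : ∀ x : F, x ^ p ^ (2 * l) = x)
    (hcard : Fintype.card F = p ^ (2 * l)) :
    (univ.filter fun x : F => x ^ p ^ l + x = 0).card = p ^ l :=
  (kFacts hl hF hcard).2.2

lemma trKKer (hl : 2 ≤ l) (hF : ∀ x : F, x ^ p ^ (2 * l) = x)
    (hcard : Fintype.card F = p ^ (2 * l)) :
    (univ.filter fun v : F => v ^ p ^ l = v ∧ trS p l v = 0).card = p ^ (l - 1) := by
  letI : DecidableEq F := fun a b => Classical.propDecidable _
  set ψ : F → F := fun x => x ^ p ^ l + x with hψ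
  have hψadd : ∀ x y : F, ψ (x + y) = ψ x + ψ y := by
    intro x y
    simp only [hψ]
    rw [add_pow_char_pow]
    ring
  set T0 := univ.filter fun x : F => trS p (2 * l) x = 0 with hT0
  set KT := univ.filter fun v : F => v ^ p ^ l = v ∧ trS p l v = 0 with hKT
  have hmap : ∀ x ∈ T0, ψ x ∈ KT := by
    intro x hx
    rw [hT0, mem_filter] at hx
    rw [hKT, mem_filter]
    refine ⟨mem_univ _, psi_mem_K hF x, ?_⟩
    rw [← trF_eq_trS_psi hF x]
    exact hx.2
  have h := Finset.card_eq_sum_card_fiberwise (s := T0) (t := KT) (f := ψ) hmap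
  have hfib : ∀ v ∈ KT, (T0.filter fun x => ψ x = v).card = p ^ l := by
    intro v hv
    rw [hKT, mem_filter] at hv
    have heq : T0.filter (fun x => ψ x = v) = univ.filter fun x => ψ x = v := by
      ext x
      rw [hT0, Finset.filter_filter]
      simp only [mem_filter, mem_univ, true_and]
      constructor
      · exact fun h => h.2
      · intro h
        refine ⟨?_, h⟩
        rw [trF_eq_trS_psi hF x]
        show trS p l (ψ x) = 0
        rw [h]
        exact hv.2.2
    rw [heq]
    -- v is in the image of ψ
    have hvK : v ∈ univ.filter fun x : F => x ^ p ^ l = x := by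
      rw [mem_filter]; exact ⟨mem_univ _, hv.2.1⟩
    have himg : v ∈ univ.image (fun x : F => x ^ p ^ l + x) := by
      rw [(kFacts hl hF hcard).2.1]
      simp only [Finset.mem_filter]
      exact ⟨mem_univ _, hv.2.1⟩
    obtain ⟨x0, _, rfl⟩ := Finset.mem_image.mp himg
    show (univ.filter fun x => ψ x = ψ x0).card = p ^ l
    rw [myFib ψ hψadd x0]
    simpa only [hψ] using psiKerCard hl hF hcard
  rw [Finset.sum_congr rfl hfib, Finset.sum_const, smul_eq_mul] at h
  have hT0card : T0.card = p ^ (2 * l - 1) := trFKer hl hF hcard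
  rw [hT0card] at h
  have hexp : p ^ (2 * l - 1) = p ^ (l - 1) * p ^ l := by
    rw [← pow_add]; congr 1; omega
  rw [hexp] at h
  exact Nat.eq_of_mul_eq_mul_right (pow_pos hpf.out.pos _) h.symm
end S4
section S5
open Finset
variable {F : Type*} [Field F] [Fintype F] {p l : ℕ} [hpf : Fact p.Prime] [CharP F p]

lemma normCount (hl : 2 ≤ l) (hF : ∀ x : F, x ^ p ^ (2 * l) = x)
    (hcard : Fintype.card F = p ^ (2 * l)) :
    ∀ u : F, u ≠ 0 → u ^ p ^ l = u →
      (univ.filter fun b : F => b ^ (p ^ l + 1) = u).card = p ^ l + 1 := by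
  letI : DecidableEq F := fun a b => Classical.propDecidable _
  have hp1 : 1 < p ^ l := Nat.one_lt_pow (by omega) hpf.out.one_lt
  have fibEq : ∀ u : F, u ≠ 0 → (∃ b0 : F, b0 ^ (p ^ l + 1) = u) →
      (univ.filter fun b : F => b ^ (p ^ l + 1) = u).card
        = (univ.filter fun b : F => b ^ (p ^ l + 1) = 1).card := by
    rintro u hu ⟨b0, hb0⟩
    have hb0ne : b0 ≠ 0 := by
      rintro rfl
      exact hu (by rw [← hb0, zero_pow (by omega)])
    have hcc := myCardComp (fun b => b * b0) (Equiv.mulRight₀ b0 hb0ne).bijective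
      (fun b : F => b ^ (p ^ l + 1) = u)
    rw [← hcc]
    congr 1
    ext b
    simp only [mem_filter, mem_univ, true_and, mul_pow, hb0]
    rw [mul_left_eq_self₀]
    constructor
    · rintro (h | h)
      · exact h
      · exact absurd h hu
    · exact fun h => Or.inl h
  -- count nonzero elements as union of fibers
  have h0 : (univ.filter fun b : F => b ≠ 0) = univ.erase (0 : F) := by
    ext b; simp [Finset.mem_erase]
  have htot : (univ.filter fun b : F => b ≠ 0).card = p ^ (2 * l) - 1 := by
    rw [h0, Finset.card_erase_of_mem (mem_univ _), Finset.card_univ, hcard]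
  have hmap : ∀ b ∈ (univ.filter fun b : F => b ≠ 0),
      b ^ (p ^ l + 1) ∈ (univ.filter fun u : F => u ≠ 0 ∧ ∃ b : F, b ^ (p ^ l + 1) = u) := by
    intro b hb
    simp only [mem_filter, mem_univ, true_and] at hb ⊢
    exact ⟨pow_ne_zero _ hb, b, rfl⟩
  have hpart := Finset.card_eq_sum_card_fiberwise hmap
  have hfibinner : ∀ u ∈ (univ.filter fun u : F => u ≠ 0 ∧ ∃ b : F, b ^ (p ^ l + 1) = u),
      ((univ.filter fun b : F => b ≠ 0).filter fun b => b ^ (p ^ l + 1) = u).card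
        = (univ.filter fun b : F => b ^ (p ^ l + 1) = 1).card := by
    intro u hu
    simp only [mem_filter, mem_univ, true_and] at hu
    rw [Finset.filter_filter]
    have : (univ.filter fun b : F => b ≠ 0 ∧ b ^ (p ^ l + 1) = u)
        = (univ.filter fun b : F => b ^ (p ^ l + 1) = u) := by
      ext b
      simp only [mem_filter, mem_univ, true_and]
      refine ⟨fun h => h.2, fun h => ⟨?_, h⟩⟩
      rintro rfl
      exact hu.1 (by rw [← h, zero_pow (by omega)])
    rw [this]
    exact fibEq u hu.1 hu.2
  rw [Finset.sum_congr rfl hfibinner, Finset.sum_const, smul_eq_mul, htot] at hpart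
  -- squeeze
  have hE_sub : (univ.filter fun u : F => u ≠ 0 ∧ ∃ b : F, b ^ (p ^ l + 1) = u)
      ⊆ (univ.filter fun u : F => u ≠ 0 ∧ u ^ p ^ l = u) := by
    intro u hu
    simp only [mem_filter, mem_univ, true_and] at hu ⊢
    obtain ⟨hu0, b, rfl⟩ := hu
    exact ⟨hu0, norm_mem_K hF b⟩
  have hK0 : (univ.filter fun u : F => u ≠ 0 ∧ u ^ p ^ l = u).card = p ^ l - 1 := by
    have heq : (univ.filter fun u : F => u ≠ 0 ∧ u ^ p ^ l = u)
        = (univ.filter fun u : F => u ^ p ^ l = u).erase 0 := by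
      ext u
      simp only [mem_filter, mem_univ, true_and, Finset.mem_erase]
    rw [heq, Finset.card_erase_of_mem, (kFacts hl hF hcard).1]
    simp only [mem_filter, mem_univ, true_and]
    exact zero_pow (pow_ne_zero _ hpf.out.pos.ne')
  have hE_le : (univ.filter fun u : F => u ≠ 0 ∧ ∃ b : F, b ^ (p ^ l + 1) = u).card ≤ p ^ l - 1 :=
    hK0 ▸ Finset.card_le_card hE_sub
  have hk1_le : (univ.filter fun b : F => b ^ (p ^ l + 1) = 1).card ≤ p ^ l + 1 :=
    unityBound (p := p) _ (by omega)
  have hprodval : (p ^ (2 * l) - 1 : ℕ) = (p ^ l - 1) * (p ^ l + 1) := by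
    have h3 : 1 ≤ p ^ (2 * l) := Nat.one_le_pow _ _ hpf.out.pos
    zify [hp1.le, h3]
    have h2' : (p : ℤ) ^ (2 * l) = (p : ℤ) ^ l * (p : ℤ) ^ l := by
      rw [← pow_add, two_mul]
    rw [h2']
    ring
  obtain ⟨hE, hk1⟩ := mySqueeze hE_le hk1_le (by rw [← hpart, ← hprodval])
    (by omega) (by omega)
  have hEeq : (univ.filter fun u : F => u ≠ 0 ∧ ∃ b : F, b ^ (p ^ l + 1) = u)
      = (univ.filter fun u : F => u ≠ 0 ∧ u ^ p ^ l = u) :=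
    Finset.eq_of_subset_of_card_le hE_sub (by rw [hE, hK0])
  intro u hu0 huK
  have huE : u ∈ (univ.filter fun u : F => u ≠ 0 ∧ ∃ b : F, b ^ (p ^ l + 1) = u) := by
    rw [hEeq]
    simp only [mem_filter, mem_univ, true_and]
    exact ⟨hu0, huK⟩
  simp only [mem_filter, mem_univ, true_and] at huE
  rw [fibEq u hu0 huE.2, hk1]
end S5
section S6
open Finset
variable {F : Type*} [Field F] [Fintype F] {p l : ℕ} [hpf : Fact p.Prime] [CharP F p]

lemma Acount (hl : 2 ≤ l) (hF : ∀ x : F, x ^ p ^ (2 * l) = x)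
    (hcard : Fintype.card F = p ^ (2 * l)) (c : F) (hc0 : c ≠ 0) (hcK : c ^ p ^ l = c) :
    (univ.filter fun b : F => trS p l (c * b ^ (p ^ l + 1)) = 0).card
      = 1 + (p ^ l + 1) * (p ^ (l - 1) - 1) := by
  letI : DecidableEq F := fun a b => Classical.propDecidable _
  have hmap : ∀ b ∈ (univ.filter fun b : F => trS p l (c * b ^ (p ^ l + 1)) = 0),
      b ^ (p ^ l + 1) ∈ (univ.filter fun u : F => u ^ p ^ l = u ∧ trS p l (c * u) = 0) := by
    intro b hb
    simp only [mem_filter, mem_univ, true_and] at hb ⊢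
    exact ⟨norm_mem_K hF b, hb⟩
  have hpart := Finset.card_eq_sum_card_fiberwise hmap
  have hinner : ∀ u ∈ (univ.filter fun u : F => u ^ p ^ l = u ∧ trS p l (c * u) = 0),
      ((univ.filter fun b : F => trS p l (c * b ^ (p ^ l + 1)) = 0).filter
          fun b => b ^ (p ^ l + 1) = u).card
        = (univ.filter fun b : F => b ^ (p ^ l + 1) = u).card := by
    intro u hu
    simp only [mem_filter, mem_univ, true_and] at hu
    rw [Finset.filter_filter]
    congr 1
    ext b
    simp only [mem_filter, mem_univ, true_and]
    refine ⟨fun h => h.2, fun h => ⟨?_, h⟩⟩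
    rw [h]
    exact hu.2
  rw [Finset.sum_congr rfl hinner] at hpart
  -- W contains 0
  have h0W : (0 : F) ∈ (univ.filter fun u : F => u ^ p ^ l = u ∧ trS p l (c * u) = 0) := by
    simp only [mem_filter, mem_univ, true_and]
    constructor
    · exact zero_pow (pow_ne_zero _ hpf.out.pos.ne')
    · rw [mul_zero]; exact trS_zero l
  rw [← Finset.add_sum_erase _ _ h0W] at hpart
  -- fiber over 0 is {0}
  have hfib0 : (univ.filter fun b : F => b ^ (p ^ l + 1) = (0:F)).card = 1 := by
    have : (univ.filter fun b : F => b ^ (p ^ l + 1) = (0:F)) = {0} := by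
      ext b
      simp only [mem_filter, mem_univ, true_and, Finset.mem_singleton]
      rw [pow_eq_zero_iff (by omega)]
    rw [this, Finset.card_singleton]
  rw [hfib0] at hpart
  -- fibers over nonzero elements of W
  have hfibn : ∀ u ∈ ((univ.filter fun u : F => u ^ p ^ l = u ∧ trS p l (c * u) = 0).erase 0),
      (univ.filter fun b : F => b ^ (p ^ l + 1) = u).card = p ^ l + 1 := by
    intro u hu
    rw [Finset.mem_erase, mem_filter] at hu
    exact normCount hl hF hcard u hu.1 hu.2.2.1
  rw [Finset.sum_congr rfl hfibn, Finset.sum_const, smul_eq_mul] at hpart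
  -- cardinality of W
  have hWcard : (univ.filter fun u : F => u ^ p ^ l = u ∧ trS p l (c * u) = 0).card
      = p ^ (l - 1) := by
    rw [← trKKer (F := F) hl hF hcard]
    apply Finset.card_nbij (fun u => c * u)
    · intro u hu
      simp only [coe_filter, Set.mem_setOf_eq, mem_filter, mem_univ, true_and] at hu ⊢
      refine ⟨?_, hu.2⟩
      rw [mul_pow, hcK, hu.1]
    · exact fun x _ y _ h => mul_left_cancel₀ hc0 h
    · intro v hv
      simp only [coe_filter, Set.mem_setOf_eq, mem_univ, true_and] at hv
      refine ⟨c⁻¹ * v, ?_, mul_inv_cancel_left₀ hc0 v⟩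
      simp only [coe_filter, Set.mem_setOf_eq, mem_univ, true_and]
      constructor
      · rw [mul_pow, inv_mem_K hcK, hv.1]
      · rw [mul_inv_cancel_left₀ hc0]
        exact hv.2
  rw [Finset.card_erase_of_mem h0W, hWcard] at hpart
  rw [hpart, mul_comm]

end S6
section S7
open Finset
variable {F : Type*} [Field F] [Fintype F] {p l : ℕ} [hpf : Fact p.Prime] [CharP F p]

lemma lineCount (hl : 2 ≤ l) (hF : ∀ x : F, x ^ p ^ (2 * l) = x)
    (hcard : Fintype.card F = p ^ (2 * l)) (a s t : F) (ha0 : a ≠ 0)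
    (haK : a ^ p ^ l = a) (haTr : trS p l a = 0) (hs : s ^ p = s) (ht : t ^ p = t)
    (ht0 : t ≠ 0) :
    (univ.filter fun b : F =>
        t * trS p l (b ^ (p ^ l + 1) * a⁻¹) + s * trS p (2 * l) b = 0).card
      = 1 + (p ^ l + 1) * (p ^ (l - 1) - 1) := by
  set c : F := t * a⁻¹ with hcdef
  have hc0 : c ≠ 0 := mul_ne_zero ht0 (inv_ne_zero ha0)
  have hcK : c ^ p ^ l = c := by
    rw [hcdef, mul_pow, pinP_pow ht l, inv_mem_K haK]
  set e : F := s * c⁻¹ with hedef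
  have heK : e ^ p ^ l = e := by
    rw [hedef, mul_pow, pinP_pow hs l, inv_mem_K hcK]
  have hrs : trS p l (s * s * c⁻¹) = 0 := by
    have h1 : s * s * c⁻¹ = (s * s * t⁻¹) * a := by
      rw [hcdef, mul_inv, inv_inv]
      ring
    have h2 : (s * s * t⁻¹) ^ p = s * s * t⁻¹ := by
      rw [mul_pow, mul_pow, inv_pow, hs, ht]
    rw [h1, trS_smul l h2, haTr, mul_zero]
  have hcond : ∀ b : F,
      (t * trS p l (b ^ (p ^ l + 1) * a⁻¹) + s * trS p (2 * l) b = 0)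
        ↔ (trS p l (c * (b + e) ^ (p ^ l + 1)) = 0) := by
    intro b
    have h1 : t * trS p l (b ^ (p ^ l + 1) * a⁻¹) = trS p l (c * b ^ (p ^ l + 1)) := by
      rw [← trS_smul l ht]
      congr 1
      rw [hcdef]
      ring
    have h2 : s * trS p (2 * l) b = trS p l (s * (b ^ p ^ l + b)) := by
      rw [trF_eq_trS_psi hF b, ← trS_smul l hs]
    have h3 : c * b ^ (p ^ l + 1) + s * (b ^ p ^ l + b)
        = c * (b + e) ^ (p ^ l + 1) - s * s * c⁻¹ := by
      have hbe : (b + e) ^ (p ^ l + 1) = (b ^ p ^ l + e) * (b + e) := by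
        rw [pow_succ, add_pow_char_pow, heK]
      rw [hbe, hedef]
      have hb : b ^ (p ^ l + 1) = b ^ p ^ l * b := pow_succ b (p ^ l)
      rw [hb]
      field_simp
      ring
    rw [h1, h2, ← trS_add, h3, trS_sub, hrs, sub_zero]
  calc (univ.filter fun b : F =>
        t * trS p l (b ^ (p ^ l + 1) * a⁻¹) + s * trS p (2 * l) b = 0).card
      = (univ.filter fun b : F => trS p l (c * (b + e) ^ (p ^ l + 1)) = 0).card := by
        congr 1
        ext b
        simp only [mem_filter, mem_univ, true_and]
        exact hcond b
    _ = (univ.filter fun b : F => trS p l (c * b ^ (p ^ l + 1)) = 0).card :=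
        myCardComp (fun b => b + e) (Equiv.addRight e).bijective
          (fun b : F => trS p l (c * b ^ (p ^ l + 1)) = 0)
    _ = 1 + (p ^ l + 1) * (p ^ (l - 1) - 1) := Acount hl hF hcard c hc0 hcK

end S7
section S8
open Finset
variable {F : Type*} [Field F] [Fintype F] {p l : ℕ} [hpf : Fact p.Prime] [CharP F p]

lemma perACount (hl : 2 ≤ l) (hF : ∀ x : F, x ^ p ^ (2 * l) = x)
    (hcard : Fintype.card F = p ^ (2 * l)) (a : F) (ha0 : a ≠ 0)
    (haK : a ^ p ^ l = a) (haTr : trS p l a = 0) :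
    (univ.filter fun b : F =>
        trS p (2 * l) b = 0 ∧ ¬ trS p l (b ^ (p ^ l + 1) * a⁻¹) = 0).card
      = (p - 1) * (p ^ (2 * l - 2) + p ^ (l - 1)) := by
  letI : DecidableEq F := fun x y => Classical.propDecidable _
  set P : Finset F := univ.filter fun x : F => x ^ p = x with hPdef
  set A : ℕ := 1 + (p ^ l + 1) * (p ^ (l - 1) - 1) with hAdef
  -- each line has A points
  have hDline : ∀ s0 ∈ P, (univ.filter fun b : F =>
      1 * trS p l (b ^ (p ^ l + 1) * a⁻¹) + s0 * trS p (2 * l) b = 0).card = A := by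
    intro s0 hs0
    rw [hPdef, mem_filter] at hs0
    exact lineCount hl hF hcard a s0 1 ha0 haK haTr hs0.2 (one_pow p) one_ne_zero
  have hD : ∑ s0 ∈ P, (univ.filter fun b : F =>
      1 * trS p l (b ^ (p ^ l + 1) * a⁻¹) + s0 * trS p (2 * l) b = 0).card = p * A := by
    rw [Finset.sum_congr rfl hDline, Finset.sum_const, smul_eq_mul, cardP hl hcard]
  -- swap the double counting
  have hswap : ∑ s0 ∈ P, (univ.filter fun b : F =>
      1 * trS p l (b ^ (p ^ l + 1) * a⁻¹) + s0 * trS p (2 * l) b = 0).card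
      = ∑ b ∈ (univ : Finset F), (P.filter fun s0 : F =>
          1 * trS p l (b ^ (p ^ l + 1) * a⁻¹) + s0 * trS p (2 * l) b = 0).card := by
    calc ∑ s0 ∈ P, (univ.filter fun b : F =>
        1 * trS p l (b ^ (p ^ l + 1) * a⁻¹) + s0 * trS p (2 * l) b = 0).card
        = ∑ s0 ∈ P, ∑ b ∈ (univ : Finset F),
            (if 1 * trS p l (b ^ (p ^ l + 1) * a⁻¹) + s0 * trS p (2 * l) b = 0
              then 1 else 0) :=
          Finset.sum_congr rfl fun s0 _ => Finset.card_filter _ _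
      _ = ∑ b ∈ (univ : Finset F), ∑ s0 ∈ P,
            (if 1 * trS p l (b ^ (p ^ l + 1) * a⁻¹) + s0 * trS p (2 * l) b = 0
              then 1 else 0) := Finset.sum_comm
      _ = ∑ b ∈ (univ : Finset F), (P.filter fun s0 : F =>
            1 * trS p l (b ^ (p ^ l + 1) * a⁻¹) + s0 * trS p (2 * l) b = 0).card :=
          Finset.sum_congr rfl fun b _ => (Finset.card_filter _ _).symm
  -- classify the inner counts
  have hinner : ∀ b ∈ (univ : Finset F), (P.filter fun s0 : F =>
      1 * trS p l (b ^ (p ^ l + 1) * a⁻¹) + s0 * trS p (2 * l) b = 0).card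
      = (if trS p (2 * l) b = 0
          then (if trS p l (b ^ (p ^ l + 1) * a⁻¹) = 0 then p else 0) else 1) := by
    intro b _
    have hQK : (b ^ (p ^ l + 1) * a⁻¹) ^ p ^ l = b ^ (p ^ l + 1) * a⁻¹ := by
      rw [mul_pow, norm_mem_K hF, inv_mem_K haK]
    have hQ : (trS p l (b ^ (p ^ l + 1) * a⁻¹)) ^ p = trS p l (b ^ (p ^ l + 1) * a⁻¹) :=
      trS_pow_p l hQK
    have hT : (trS p (2 * l) b) ^ p = trS p (2 * l) b := trS_pow_p (2 * l) (hF b)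
    by_cases hT0 : trS p (2 * l) b = 0
    · by_cases hQ0 : trS p l (b ^ (p ^ l + 1) * a⁻¹) = 0
      · rw [if_pos hT0, if_pos hQ0]
        have : (P.filter fun s0 : F =>
            1 * trS p l (b ^ (p ^ l + 1) * a⁻¹) + s0 * trS p (2 * l) b = 0) = P := by
          apply Finset.filter_true_of_mem
          intro s0 _
          rw [hT0, hQ0]
          ring
        rw [this, hPdef]
        exact cardP hl hcard
      · rw [if_pos hT0, if_neg hQ0]
        have : (P.filter fun s0 : F =>
            1 * trS p l (b ^ (p ^ l + 1) * a⁻¹) + s0 * trS p (2 * l) b = 0) = ∅ := by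
          apply Finset.filter_false_of_mem
          intro s0 _
          rw [hT0]
          intro hcon
          apply hQ0
          rw [mul_zero, add_zero, one_mul] at hcon
          exact hcon
        rw [this, Finset.card_empty]
    · rw [if_neg hT0]
      have : (P.filter fun s0 : F =>
          1 * trS p l (b ^ (p ^ l + 1) * a⁻¹) + s0 * trS p (2 * l) b = 0)
          = {-(trS p l (b ^ (p ^ l + 1) * a⁻¹)) * (trS p (2 * l) b)⁻¹} := by
        ext s0
        rw [mem_filter, Finset.mem_singleton, hPdef, mem_filter]
        constructor
        · rintro ⟨⟨_, hsP⟩, hcond⟩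
          rw [one_mul] at hcond
          rw [eq_mul_inv_iff_mul_eq₀ hT0]
          linear_combination hcond
        · rintro rfl
          refine ⟨⟨mem_univ _, ?_⟩, ?_⟩
          · rw [mul_pow, inv_pow, hT, neg_pow, neg_one_pow_char, hQ]
            ring
          · rw [one_mul]
            field_simp
            ring
      rw [this, Finset.card_singleton]
  -- assemble the double count
  rw [hswap, Finset.sum_congr rfl hinner, Finset.sum_ite, Finset.sum_ite,
    Finset.sum_const, Finset.sum_const, Finset.sum_const, smul_eq_mul, smul_eq_mul,
    smul_eq_mul, mul_zero, add_zero, mul_one] at hD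
  -- names for the three counts
  have hTker : (univ.filter fun b : F => trS p (2 * l) b = 0).card = p ^ (2 * l - 1) :=
    trFKer hl hF hcard
  have hTsplit : (univ.filter fun b : F => trS p (2 * l) b = 0).card
      + (univ.filter fun b : F => ¬ trS p (2 * l) b = 0).card = p ^ (2 * l) := by
    rw [Finset.card_filter_add_card_filter_not, Finset.card_univ, hcard]
  have hQsplit : ((univ.filter fun b : F => trS p (2 * l) b = 0).filter
        fun b : F => trS p l (b ^ (p ^ l + 1) * a⁻¹) = 0).card
      + ((univ.filter fun b : F => trS p (2 * l) b = 0).filter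
        fun b : F => ¬ trS p l (b ^ (p ^ l + 1) * a⁻¹) = 0).card = p ^ (2 * l - 1) := by
    rw [Finset.card_filter_add_card_filter_not, hTker]
  have hgoalshape : (univ.filter fun b : F =>
        trS p (2 * l) b = 0 ∧ ¬ trS p l (b ^ (p ^ l + 1) * a⁻¹) = 0)
      = ((univ.filter fun b : F => trS p (2 * l) b = 0).filter
        fun b : F => ¬ trS p l (b ^ (p ^ l + 1) * a⁻¹) = 0) := by
    ext b
    simp only [mem_filter, mem_univ, true_and, and_assoc]
  rw [hgoalshape]
  -- arithmetic
  set x : ℕ := p ^ (l - 1) with hxdef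
  set Na : ℕ := ((univ.filter fun b : F => trS p (2 * l) b = 0).filter
      fun b : F => ¬ trS p l (b ^ (p ^ l + 1) * a⁻¹) = 0).card with hNadef
  set m00 : ℕ := ((univ.filter fun b : F => trS p (2 * l) b = 0).filter
      fun b : F => trS p l (b ^ (p ^ l + 1) * a⁻¹) = 0).card with hm00def
  set s2 : ℕ := (univ.filter fun b : F => ¬ trS p (2 * l) b = 0).card with hs2def
  have hx0 : 1 ≤ x := Nat.one_le_pow _ _ hpf.out.pos
  have hp1 : 1 ≤ p := hpf.out.pos
  have hxl : p ^ l = p * x := by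
    rw [hxdef, ← pow_succ']
    congr 1
    omega
  have hx2l2 : p ^ (2 * l - 2) = x * x := by
    rw [hxdef, ← pow_add]
    congr 1
    omega
  have hx2l1 : p ^ (2 * l - 1) = p * (x * x) := by
    rw [hxdef, ← pow_add, ← pow_succ']
    congr 1
    omega
  have hx2l : p ^ (2 * l) = p * (p * (x * x)) := by
    rw [hxdef, ← pow_add, ← pow_succ', ← pow_succ']
    congr 1
    omega
  rw [hAdef, hxl] at hD
  rw [hx2l1] at hQsplit
  rw [hTker, hx2l1, hx2l] at hTsplit
  rw [hx2l2]
  -- hD : p * (1 + (p*x+1)*(x-1)) = p * m00 + s2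
  -- hTsplit : p*(x*x) + s2 = p*(p*(x*x))
  -- hQsplit : m00 + Na = p*(x*x)
  have key : (p : ℤ) * (Na : ℤ) = (p : ℤ) * (((p : ℤ) - 1) * ((x : ℤ) * x + x)) := by
    zify [hx0, hp1] at hD hTsplit hQsplit
    linear_combination (p : ℤ) * hQsplit - hD + hTsplit
  have hNaZ : (Na : ℤ) = ((p : ℤ) - 1) * ((x : ℤ) * x + x) :=
    mul_left_cancel₀ (by exact_mod_cast hpf.out.pos.ne') key
  zify [hp1]
  linear_combination hNaZ

end S8
open Finset in
/-- Let `p` be a prime, `l ≥ 2`, `q = p^{2l}`, and `F = GF(q)`.  The subfield `GF(p^l)` is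
identified with `{u : F // u^{p^l} = u}`, `Tr_{p^l/p}(u) = Σ_{i<l} u^{p^i}` and
`Tr_{q/p}(x) = Σ_{i<2l} x^{p^i}`.  The number of pairs `(a,b)` with `a ∈ GF(p^l)*`,
`b ∈ GF(q)`, satisfying `Tr_{p^l/p}(b^{p^l+1}/a) ≠ 0`, `Tr_{p^l/p}(a) = 0` and
`Tr_{q/p}(b) = 0` equals `(p−1)(p^{l−1}−1)(p^{2l−2}+p^{l−1})`. -/
theorem stmt5 (p l : ℕ) (hp : p.Prime) (hl : 2 ≤ l) (F : Type*) [Field F] [Fintype F]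
    (hcard : Fintype.card F = p ^ (2 * l)) :
    Set.ncard {ab : F × F |
        ab.1 ≠ 0 ∧ ab.1 ^ p ^ l = ab.1 ∧
        (∑ i ∈ Finset.range l, (ab.2 ^ (p ^ l + 1) / ab.1) ^ p ^ i) ≠ 0 ∧
        (∑ i ∈ Finset.range l, ab.1 ^ p ^ i) = 0 ∧
        (∑ i ∈ Finset.range (2 * l), ab.2 ^ p ^ i) = 0} =
      (p - 1) * (p ^ (l - 1) - 1) * (p ^ (2 * l - 2) + p ^ (l - 1)) := by
  haveI hpf : Fact p.Prime := ⟨hp⟩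
  haveI : CharP F (ringChar F) := ringChar.charP F
  obtain ⟨n, hrp, hcardr⟩ := FiniteField.card F (ringChar F)
  have hpr : ringChar F = p := by
    have hdvd : p ∣ (ringChar F) ^ (n : ℕ) := by
      rw [← hcardr, hcard]
      exact dvd_pow_self p (by omega)
    exact ((Nat.prime_dvd_prime_iff_eq hp hrp).mp (hp.dvd_of_dvd_pow hdvd)).symm
  haveI : CharP F p := by rw [← hpr]; infer_instance
  have hF : ∀ x : F, x ^ p ^ (2 * l) = x := fun x => by
    rw [← hcard]; exact FiniteField.pow_card x
  -- translate the set cardinality into a `Finset` count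
  have hset : {ab : F × F |
      ab.1 ≠ 0 ∧ ab.1 ^ p ^ l = ab.1 ∧
      (∑ i ∈ Finset.range l, (ab.2 ^ (p ^ l + 1) / ab.1) ^ p ^ i) ≠ 0 ∧
      (∑ i ∈ Finset.range l, ab.1 ^ p ^ i) = 0 ∧
      (∑ i ∈ Finset.range (2 * l), ab.2 ^ p ^ i) = 0}.ncard
      = (univ.filter fun ab : F × F =>
        ab.1 ≠ 0 ∧ ab.1 ^ p ^ l = ab.1 ∧
        (∑ i ∈ Finset.range l, (ab.2 ^ (p ^ l + 1) / ab.1) ^ p ^ i) ≠ 0 ∧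
        (∑ i ∈ Finset.range l, ab.1 ^ p ^ i) = 0 ∧
        (∑ i ∈ Finset.range (2 * l), ab.2 ^ p ^ i) = 0).card := by
    rw [← Set.ncard_coe_finset]
    congr 1
    ext ab
    simp only [Set.mem_setOf_eq, coe_filter, mem_univ, true_and]
  rw [hset]
  -- the set of good values of `a`
  have h0G : (0 : F) ∈ (univ.filter fun v : F => v ^ p ^ l = v ∧ trS p l v = 0) := by
    simp only [mem_filter, mem_univ, true_and]
    exact ⟨zero_pow (pow_ne_zero _ hp.pos.ne'), trS_zero l⟩
  have hGcard : (univ.filter fun a0 : F =>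
      a0 ≠ 0 ∧ a0 ^ p ^ l = a0 ∧ trS p l a0 = 0).card = p ^ (l - 1) - 1 := by
    have heq : (univ.filter fun a0 : F => a0 ≠ 0 ∧ a0 ^ p ^ l = a0 ∧ trS p l a0 = 0)
        = (univ.filter fun v : F => v ^ p ^ l = v ∧ trS p l v = 0).erase 0 := by
      ext v
      simp only [mem_filter, mem_univ, true_and, Finset.mem_erase]
    rw [heq, Finset.card_erase_of_mem h0G, trKKer hl hF hcard]
  -- fiber the count over the first coordinate
  have hmap : ∀ ab ∈ (univ.filter fun ab : F × F =>
      ab.1 ≠ 0 ∧ ab.1 ^ p ^ l = ab.1 ∧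
      (∑ i ∈ Finset.range l, (ab.2 ^ (p ^ l + 1) / ab.1) ^ p ^ i) ≠ 0 ∧
      (∑ i ∈ Finset.range l, ab.1 ^ p ^ i) = 0 ∧
      (∑ i ∈ Finset.range (2 * l), ab.2 ^ p ^ i) = 0),
      ab.1 ∈ (univ.filter fun a0 : F => a0 ≠ 0 ∧ a0 ^ p ^ l = a0 ∧ trS p l a0 = 0) := by
    intro ab hab
    simp only [mem_filter, mem_univ, true_and] at hab ⊢
    exact ⟨hab.1, hab.2.1, hab.2.2.2.1⟩
  have hpart := Finset.card_eq_sum_card_fiberwise hmap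
  have hfib : ∀ a0 ∈ (univ.filter fun a0 : F =>
      a0 ≠ 0 ∧ a0 ^ p ^ l = a0 ∧ trS p l a0 = 0),
      ((univ.filter fun ab : F × F =>
        ab.1 ≠ 0 ∧ ab.1 ^ p ^ l = ab.1 ∧
        (∑ i ∈ Finset.range l, (ab.2 ^ (p ^ l + 1) / ab.1) ^ p ^ i) ≠ 0 ∧
        (∑ i ∈ Finset.range l, ab.1 ^ p ^ i) = 0 ∧
        (∑ i ∈ Finset.range (2 * l), ab.2 ^ p ^ i) = 0).filter
          fun ab => ab.1 = a0).card
      = (p - 1) * (p ^ (2 * l - 2) + p ^ (l - 1)) := by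
    intro a0 ha0'
    simp only [mem_filter, mem_univ, true_and] at ha0'
    obtain ⟨ha0, haK, haTr⟩ := ha0'
    rw [← perACount hl hF hcard a0 ha0 haK haTr]
    apply Finset.card_nbij (fun ab : F × F => ab.2)
    · intro ab hab
      rw [Finset.mem_coe, Finset.mem_filter] at hab
      obtain ⟨habP, h6⟩ := hab
      rw [Finset.mem_filter] at habP
      obtain ⟨_, h1, h2, h3, h4, h5⟩ := habP
      rw [Finset.mem_coe, Finset.mem_filter]
      refine ⟨mem_univ _, h5, fun hcon => h3 ?_⟩
      show trS p l (ab.2 ^ (p ^ l + 1) / ab.1) = 0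
      rw [h6, div_eq_mul_inv]
      exact hcon
    · intro ab hab ab' hab' hsnd
      rw [Finset.mem_coe, Finset.mem_filter] at hab hab'
      exact Prod.ext (hab.2.trans hab'.2.symm) hsnd
    · intro b hb
      rw [Finset.mem_coe, Finset.mem_filter] at hb
      refine ⟨(a0, b), ?_, rfl⟩
      rw [Finset.mem_coe, Finset.mem_filter, Finset.mem_filter]
      refine ⟨⟨mem_univ _, ha0, haK, fun hcon => hb.2.2 ?_, haTr, hb.2.1⟩, rfl⟩
      have hcon' : trS p l (b ^ (p ^ l + 1) / a0) = 0 := hcon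
      rwa [div_eq_mul_inv] at hcon'
  rw [hpart, Finset.sum_congr rfl hfib, Finset.sum_const, smul_eq_mul, hGcard]
  ring
end

section
/- Let p be an odd prime, m an odd positive integer, and q = p^m. The number of pairs (a,b) ∈ GF(q) × GF(q) with a ≠ 0, Tr_{q/p}(b²/(4a)) = 0, Tr_{q/p}(a) ≠ 0, and Tr_{q/p}(b) = 0, equals p^{m−2}(p−1)(p^{m−1}+p−1). -/
/-!
Substituting `b = 2 a t` turns the conditions into `Tr a ≠ 0`, `Tr (t a) = 0`, `Tr (t² a) = 0`.
For fixed `t` these say that `a` lies in the trace-orthogonal complement of `{t, t²}` but not in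
that of `{1, t, t²}`. For `t = 0` this leaves `p^m - p^(m-1)` choices of `a`, and for
`0 ≠ t ∈ GF(p)` none. For `t ∉ GF(p)` the degree of `t` divides the odd `m`, so it is at least
`3`; hence `1, t, t²` are linearly independent and, the trace form being nondegenerate, there are
`p^(m-2) - p^(m-3)` choices. Summing over `t` gives the count.
-/

open Module

lemma ncard_setOf_prod_eq_sum {α β : Type*} [Fintype α] [Fintype β] (P : α → β → Prop) :
    {x : α × β | P x.1 x.2}.ncard = ∑ b, {a | P a b}.ncard := by
  classical
  simp only [Set.ncard_eq_toFinset_card', Set.toFinset_ofPred, Finset.card_filter]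
  exact Fintype.sum_prod_type_right _

lemma sum_eq_add_card_mul_of_algebraMap {K F : Type*} [Field K] [Field F] [Algebra K F] [Fintype K]
    [Fintype F] (f : F → ℚ) {y : ℚ} (hK : ∀ u : K, u ≠ 0 → f (algebraMap K F u) = 0)
    (hF : ∀ t ∉ Set.range (algebraMap K F), f t = y) :
    ∑ t, f t = f 0 + (Nat.card F - Nat.card K) * y := by
  classical
  let s := Finset.univ.map ⟨algebraMap K F, (algebraMap K F).injective⟩
  have hs : ∑ t ∈ s, f t = f 0 := by
    rw [Finset.sum_map]
    exact (Fintype.sum_eq_single 0 hK).trans (congrArg f (map_zero _))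
  have hsc : ∑ t ∈ sᶜ, f t = (Nat.card F - Nat.card K) * y := by
    rw [Finset.sum_congr rfl fun t ht => hF t (by simpa [s] using ht), Finset.sum_const,
      Finset.card_compl, Finset.card_map, Finset.card_univ, nsmul_eq_mul,
      Nat.cast_sub (Fintype.card_le_of_injective _ (algebraMap K F).injective),
      Nat.card_eq_fintype_card, Nat.card_eq_fintype_card]
  rw [← Finset.sum_add_sum_compl s, hs, hsc]

section TraceOrthogonal

variable (K : Type*) {F : Type*} [Field K] [Field F] [Algebra K F]

noncomputable def traceOrthogonal (s : Set F) : Submodule K F :=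
  (Algebra.traceForm K F).orthogonal (Submodule.span K s)

variable {K}

lemma mem_traceOrthogonal {s : Set F} {a : F} :
    a ∈ traceOrthogonal K s ↔ ∀ x ∈ s, Algebra.trace K F (x * a) = 0 :=
  ⟨fun h x hx => h x (Submodule.subset_span hx), fun h _ hy =>
    Submodule.span_le (p := LinearMap.ker ((Algebra.traceForm K F).flip a)).mpr h hy⟩

lemma finrank_traceOrthogonal [FiniteDimensional K F] [Algebra.IsSeparable K F] {ι : Type*}
    [Fintype ι] {v : ι → F} (hv : LinearIndependent K v) :
    finrank K (traceOrthogonal K (Set.range v)) = finrank K F - Fintype.card ι := by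
  rw [traceOrthogonal, LinearMap.BilinForm.finrank_orthogonal (traceForm_nondegenerate K F),
    finrank_span_eq_card hv]

lemma ncard_traceOrthogonal [Finite K] [FiniteDimensional K F] {ι : Type*}
    [Fintype ι] {v : ι → F} (hv : LinearIndependent K v) :
    ((traceOrthogonal K (Set.range v) : Set F).ncard : ℚ) =
      Nat.card F / Nat.card K ^ Fintype.card ι := by
  have hK : (Nat.card K : ℚ) ≠ 0 := Nat.cast_ne_zero.mpr Nat.card_pos.ne'
  rw [eq_div_iff (pow_ne_zero _ hK), natCard_eq_pow_finrank (K := K) (V := F)]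
  rw [← Nat.card_coe_set_eq, SetLike.coe_sort_coe, natCard_eq_pow_finrank (K := K)]
  norm_cast
  rw [← pow_add, finrank_traceOrthogonal hv, Nat.sub_add_cancel hv.fintype_card_le_finrank]

lemma three_le_natDegree_minpoly [FiniteDimensional K F] (hodd : Odd (finrank K F)) {t : F}
    (ht : t ∉ Set.range (algebraMap K F)) : 3 ≤ (minpoly K t).natDegree := by
  have hint := Algebra.IsIntegral.isIntegral (R := K) t
  have hpos := minpoly.natDegree_pos hint
  have hne_one : (minpoly K t).natDegree ≠ 1 := fun h => ht (minpoly.natDegree_eq_one_iff.mp h)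
  obtain ⟨k, hk⟩ := hodd.of_dvd_nat (minpoly.degree_dvd hint)
  omega

lemma linearIndependent_one_self_sq {t : F} (ht : 3 ≤ (minpoly K t).natDegree) :
    LinearIndependent K ![1, t, t ^ 2] := by
  convert (linearIndependent_pow t).comp (Fin.castLE ht) (Fin.castLE_injective ht)
  ext i; fin_cases i <;> simp

lemma traceOrthogonal_anti {s s' : Set F} (h : s ⊆ s') :
    traceOrthogonal K s' ≤ traceOrthogonal K s :=
  LinearMap.BilinForm.orthogonal_le (Submodule.span_mono h)

variable (K) in
def traceConditionSet (t : F) : Set F :=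
  {a | Algebra.trace K F a ≠ 0 ∧ Algebra.trace K F (t * a) = 0 ∧
    Algebra.trace K F (t ^ 2 * a) = 0}

lemma ne_zero_of_mem_traceConditionSet {t a : F} (ha : a ∈ traceConditionSet K t) : a ≠ 0 := by
  rintro rfl
  exact ha.1 (map_zero _)

lemma traceConditionSet_eq_diff (t : F) :
    traceConditionSet K t =
      (traceOrthogonal K (Set.range ![t, t ^ 2]) : Set F) \
        traceOrthogonal K (Set.range ![1, t, t ^ 2]) := by
  ext a
  simp only [traceConditionSet, Matrix.range_cons, Matrix.range_empty, Set.union_empty,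
    Set.union_singleton, Set.union_insert, Set.mem_sdiff, SetLike.mem_coe, mem_traceOrthogonal,
    Set.forall_mem_insert, Set.mem_singleton_iff, forall_eq, Set.mem_ofPred_eq, one_mul]
  tauto

lemma traceConditionSet_zero :
    traceConditionSet K (0 : F) = (traceOrthogonal K (Set.range ![(1 : F)]) : Set F)ᶜ := by
  ext a
  simp [traceConditionSet, mem_traceOrthogonal]

lemma traceConditionSet_algebraMap {u : K} (hu : u ≠ 0) :
    traceConditionSet K (algebraMap K F u) = ∅ := by
  refine Set.eq_empty_of_forall_notMem fun a ⟨hTr, hTrt, _⟩ => hTr ?_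
  rwa [← Algebra.smul_def, map_smul, smul_eq_mul, mul_eq_zero, or_iff_right hu] at hTrt

lemma ncard_traceConditionSet_zero [Finite K] [FiniteDimensional K F] :
    ((traceConditionSet K (0 : F)).ncard : ℚ) = Nat.card F - Nat.card F / Nat.card K := by
  have : Finite F := Module.finite_of_finite K
  have h1 := ncard_traceOrthogonal (K := K) (v := ![(1 : F)])
    (linearIndependent_unique_iff.mpr one_ne_zero)
  rw [traceConditionSet_zero, Set.ncard_compl, Nat.cast_sub (Set.ncard_le_card _), h1]
  simp

lemma ncard_traceConditionSet_of_notMem_range [Finite K] [FiniteDimensional K F]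
    (hodd : Odd (finrank K F)) {t : F} (ht : t ∉ Set.range (algebraMap K F)) :
    ((traceConditionSet K t).ncard : ℚ) =
      Nat.card F / Nat.card K ^ 2 - Nat.card F / Nat.card K ^ 3 := by
  have : Finite F := Module.finite_of_finite K
  have hv := linearIndependent_one_self_sq (three_le_natDegree_minpoly hodd ht)
  have hv' : LinearIndependent K ![t, t ^ 2] := hv.comp Fin.succ (Fin.succ_injective _)
  have hsub : (traceOrthogonal K (Set.range ![1, t, t ^ 2]) : Set F) ⊆
      traceOrthogonal K (Set.range ![t, t ^ 2]) :=
    traceOrthogonal_anti (Set.range_comp_subset_range Fin.succ ![1, t, t ^ 2])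
  rw [traceConditionSet_eq_diff, Set.ncard_sdiff hsub, Nat.cast_sub (Set.ncard_le_ncard hsub),
    ncard_traceOrthogonal hv, ncard_traceOrthogonal hv']
  simp

lemma setOf_pairs_eq_image (hK : ringChar K ≠ 2) :
    {ab : F × F | ab.1 ≠ 0 ∧ Algebra.trace K F (ab.2 ^ 2 / (4 * ab.1)) = 0 ∧
        Algebra.trace K F ab.1 ≠ 0 ∧ Algebra.trace K F ab.2 = 0} =
      (fun x : F × F => (x.1, 2 * x.1 * x.2)) '' {x | x.1 ∈ traceConditionSet K x.2} := by
  have h2F : (2 : F) ≠ 0 := Ring.two_ne_zero (Algebra.ringChar_eq K F ▸ hK)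
  have h4F : (4 : F) ≠ 0 := (show (2 : F) * 2 = 4 by norm_num) ▸ mul_ne_zero h2F h2F
  have trace_two_mul : ∀ x : F, Algebra.trace K F (2 * x) = 0 ↔ Algebra.trace K F x = 0 := by
    intro x
    rw [two_mul, map_add, ← two_mul, mul_eq_zero, or_iff_right (Ring.two_ne_zero hK)]
  ext ⟨a, b⟩
  simp only [traceConditionSet, Set.mem_ofPred_eq, Set.mem_image, Prod.mk.injEq, Prod.exists]
  constructor
  · rintro ⟨ha, hsq, hTa, hTb⟩
    refine ⟨a, b / (2 * a), ⟨hTa, ?_, ?_⟩, rfl, by field_simp⟩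
    · rw [← trace_two_mul, show 2 * (b / (2 * a) * a) = b by field_simp, hTb]
    · rwa [show (b / (2 * a)) ^ 2 * a = b ^ 2 / (4 * a) by field_simp; ring]
  · rintro ⟨a, t, ha, rfl, rfl⟩
    refine ⟨ne_zero_of_mem_traceConditionSet ha, ?_, ha.1, ?_⟩
    · rw [show (2 * a * t) ^ 2 / (4 * a) = t ^ 2 * a by field_simp; ring]
      exact ha.2.2
    · rw [show 2 * a * t = 2 * (t * a) by ring, trace_two_mul]
      exact ha.2.1

lemma ncard_setOf_pairs_eq_sum [Fintype F] (hK : ringChar K ≠ 2) :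
    {ab : F × F | ab.1 ≠ 0 ∧ Algebra.trace K F (ab.2 ^ 2 / (4 * ab.1)) = 0 ∧
        Algebra.trace K F ab.1 ≠ 0 ∧ Algebra.trace K F ab.2 = 0}.ncard =
      ∑ t : F, (traceConditionSet K t).ncard := by
  rw [setOf_pairs_eq_image hK, Set.InjOn.ncard_image,
    ncard_setOf_prod_eq_sum (fun a t => a ∈ traceConditionSet K t)]
  · rfl
  rintro ⟨a, t⟩ ha ⟨a', t'⟩ - h
  simp only [Prod.mk.injEq] at h ⊢
  obtain ⟨rfl, h⟩ := h
  have h2F : (2 : F) ≠ 0 := Ring.two_ne_zero (Algebra.ringChar_eq K F ▸ hK)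
  exact ⟨rfl, mul_left_cancel₀ (mul_ne_zero h2F (ne_zero_of_mem_traceConditionSet ha)) h⟩

end TraceOrthogonal

/-- Let `p` be an odd prime, `m` an odd positive integer, `q = p^m` and `F = GF(q)`.
The number of pairs `(a,b) ∈ GF(q) × GF(q)` with `a ≠ 0`, `Tr_{q/p}(b²/(4a)) = 0`,
`Tr_{q/p}(a) ≠ 0` and `Tr_{q/p}(b) = 0` equals `p^{m−2}(p−1)(p^{m−1}+p−1)`. -/
theorem stmt10 (p m : ℕ) (hp : p.Prime) (hpodd : Odd p) (hm : Odd m) (F : Type*) [Field F]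
    [Fintype F] [Algebra (ZMod p) F] (hcard : Fintype.card F = p ^ m) :
    (Set.ncard {ab : F × F | ab.1 ≠ 0 ∧
        Algebra.trace (ZMod p) F (ab.2 ^ 2 / (4 * ab.1)) = 0 ∧
        Algebra.trace (ZMod p) F ab.1 ≠ 0 ∧
        Algebra.trace (ZMod p) F ab.2 = 0} : ℚ) =
      (p : ℚ) ^ ((m : ℤ) - 2) * ((p : ℚ) - 1) * ((p : ℚ) ^ ((m : ℤ) - 1) + (p : ℚ) - 1) := by
  have : Fact p.Prime := ⟨hp⟩
  have hchar : ringChar (ZMod p) ≠ 2 := by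
    rw [ZMod.ringChar_zmod_n]
    rintro rfl
    exact Nat.not_odd_iff_even.mpr even_two hpodd
  have hF : Nat.card F = p ^ m := Nat.card_eq_fintype_card.trans hcard
  have hrank : finrank (ZMod p) F = m := by
    have := natCard_eq_pow_finrank (K := ZMod p) (V := F)
    rw [hF, Nat.card_zmod] at this
    exact (Nat.pow_right_injective hp.two_le this).symm
  rw [ncard_setOf_pairs_eq_sum hchar, Nat.cast_sum,
    sum_eq_add_card_mul_of_algebraMap _ (fun u hu => by simp [traceConditionSet_algebraMap hu])
      (fun t ht => ncard_traceConditionSet_of_notMem_range (hrank ▸ hm) ht),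
    ncard_traceConditionSet_zero, hF, Nat.card_zmod]
  have hp0 : (p : ℚ) ≠ 0 := Nat.cast_ne_zero.mpr hp.ne_zero
  rw [zpow_sub₀ hp0, zpow_sub₀ hp0, zpow_natCast]
  push_cast
  field_simp
  ring
end

section
/- Let q = 2^m with m ≥ 2 and let f : GF(q) → GF(q) be a bijection with f(0) = 0 such that, for all pairwise distinct x, y, z ∈ GF(q), (f(x) + f(y))/(x + y) ≠ (f(x) + f(z))/(x + z). Then for every (a,b) ≠ (0,0) in GF(q) × GF(q), the codeword c(a,b) = ((a·f(x) + b·x)_{x ∈ GF(q)*}, b, a) has Hamming weight exactly q; that is, C_{(f,q)} is a [q+1, 2, q] MDS code over GF(q). -/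
def ovalCodeword {F : Type*} [Field F] (f : F → F) (a b : F) :
    ({x : F // x ≠ 0} ⊕ Fin 2) → F :=
  Sum.elim (fun x => a * f x.1 + b * x.1) ![b, a]

lemma ovalCount {F : Type*} [Field F] [Fintype F] [DecidableEq F]
    (g : ({x : F // x ≠ 0} ⊕ Fin 2) → F) (i0 : ({x : F // x ≠ 0} ⊕ Fin 2))
    (h : ∀ i, g i = 0 ↔ i = i0) :
    hammingNorm g = Fintype.card F := by
  have h2 : (Finset.univ.filter (fun i => g i ≠ 0)) = Finset.univ.erase i0 := by
    rw [← Finset.filter_ne']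
    exact Finset.filter_congr (fun i _ => by simp [h i])
  have hc : Fintype.card ({x : F // x ≠ 0} ⊕ Fin 2) = Fintype.card F + 1 := by
    rw [Fintype.card_sum, Fintype.card_fin]
    have h3 : Fintype.card {x : F // x ≠ 0} = Fintype.card F - 1 := by
      have := Fintype.card_subtype_compl (fun x : F => x = 0) (α := F)
      simp only [Fintype.card_subtype_eq] at this; exact this
    have : 1 ≤ Fintype.card F := Fintype.card_pos
    omega
  have h4 : hammingNorm g = (Finset.univ.erase i0).card := by
    simp only [hammingNorm, ← h2]
  rw [h4, Finset.card_erase_of_mem (Finset.mem_univ _), Finset.card_univ, hc]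
  omega

/-- Let `q = 2^m` with `m ≥ 2` and let `f : GF(q) → GF(q)` be a bijection with `f(0) = 0`
satisfying the slope condition `(f(x)+f(y))/(x+y) ≠ (f(x)+f(z))/(x+z)` for all pairwise
distinct `x, y, z`.  Then every codeword `c(a,b)` with `(a,b) ≠ (0,0)` has Hamming weight
exactly `q`; that is, `C_{(f,q)}` is a `[q+1, 2, q]` MDS code. -/
theorem stmt18 (m : ℕ) (hm : 2 ≤ m) (F : Type*) [Field F] [Fintype F] [DecidableEq F]
    (hcard : Fintype.card F = 2 ^ m) (f : F → F) (hbij : Function.Bijective f)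
    (hf0 : f 0 = 0)
    (hslope : ∀ x y z : F, x ≠ y → x ≠ z → y ≠ z →
      (f x + f y) / (x + y) ≠ (f x + f z) / (x + z)) :
    ∀ a b : F, ¬(a = 0 ∧ b = 0) → hammingNorm (ovalCodeword f a b) = 2 ^ m := by
  -- characteristic 2
  have hchar : ringChar F = 2 := by
    rw [FiniteField.even_card_iff_char_two, hcard]
    have : (2:ℕ) ∣ 2 ^ m := dvd_pow_self 2 (by omega)
    omega
  haveI : CharP F 2 := hchar ▸ ringChar.charP F
  have hadd : ∀ u v : F, u + v = 0 ↔ u = v := fun u v => by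
    rw [← CharTwo.sub_eq_add, sub_eq_zero]
  -- f x ≠ 0 for x ≠ 0
  have hfne : ∀ x : F, x ≠ 0 → f x ≠ 0 := fun x hx h =>
    hx (hbij.injective (h.trans hf0.symm))
  -- x ↦ f x / x is injective on nonzero elements
  have hinj : ∀ x y : F, x ≠ 0 → y ≠ 0 → f x / x = f y / y → x = y := by
    intro x y hx hy hxy
    by_contra hne
    apply hslope x y 0 hne hx hy
    rw [add_zero, hf0, add_zero]
    have hxyne : x + y ≠ 0 := fun h => hne ((hadd x y).mp h)
    rw [div_eq_div_iff hx hy] at hxy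
    rw [div_eq_div_iff hxyne hx]
    linear_combination -hxy
  intro a b hab
  rw [← hcard]
  rcases eq_or_ne a 0 with ha | ha
  · rcases eq_or_ne b 0 with hb | hb
    · exact absurd ⟨ha, hb⟩ hab
    · apply ovalCount _ (Sum.inr 1)
      rintro (x | j)
      · simp [ovalCodeword, ha, hb, x.2]
      · fin_cases j <;> simp [ovalCodeword, ha, hb]
  · rcases eq_or_ne b 0 with hb | hb
    · apply ovalCount _ (Sum.inr 0)
      rintro (x | j)
      · simp [ovalCodeword, ha, hb, hfne x.1 x.2]
      · fin_cases j <;> simp [ovalCodeword, ha, hb]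
    · -- a ≠ 0, b ≠ 0 : unique zero among inl coordinates
      set φ : {x : F // x ≠ 0} → {x : F // x ≠ 0} :=
        fun x => ⟨f x.1 / x.1, div_ne_zero (hfne x.1 x.2) x.2⟩ with hφ
      have hφinj : Function.Injective φ := by
        intro x y h
        exact Subtype.ext (hinj x.1 y.1 x.2 y.2 (congrArg Subtype.val h))
      have hφsurj : Function.Surjective φ :=
        (Finite.injective_iff_surjective).mp hφinj
      obtain ⟨x0, hx0⟩ := hφsurj ⟨b / a, div_ne_zero hb ha⟩
      have hx0' : f x0.1 / x0.1 = b / a := congrArg Subtype.val hx0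
      apply ovalCount _ (Sum.inl x0)
      rintro (x | j)
      · simp only [ovalCodeword, Sum.elim_inl, Sum.inl.injEq]
        constructor
        · intro h
          have h1 : a * f x.1 = b * x.1 := (hadd _ _).mp h
          have h2 : f x.1 / x.1 = b / a := by
            rw [div_eq_div_iff x.2 ha]
            linear_combination h1
          exact Subtype.ext (hinj x.1 x0.1 x.2 x0.2 (h2.trans hx0'.symm))
        · rintro rfl
          rw [hadd]
          rw [div_eq_div_iff x.2 ha] at hx0'
          linear_combination hx0'
      · fin_cases j <;> simp [ovalCodeword, ha, hb]
end
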